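/- arXiv:1307.5624 — 12 statements merged into one kernel-verified Lean document; each statement's English description precedes it below -/
import Mathlib

section
/- The number of ways to permute the multiset {x_1^ν, ..., x_n^ν} (where x_1 < ... < x_n) such that for each j, all elements between any two occurrences of x_j are at least x_j, together with t copies of a symbol 0 that is smaller than all x_i (with the same betweenness condition for 0), equals the product ∏_{k=0}^{n-1} (kν + t + 1). -/
/-- The "betweenness" condition of generalized Stirling permutations: for any
two equal entries of the word, every entry strictly between them is at least
as large as them. -/
def IsSmooth (l : List ℕ) : Prop :=
  ∀ i m k : ℕ, i < m → m < k → k < l.length →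
    l.getD i 0 = l.getD k 0 → l.getD i 0 ≤ l.getD m 0

/-- The multiset `{0^t, 1^ν, 2^ν, ..., n^ν}`. -/
def stirlingMultiset (ν t n : ℕ) : Multiset ℕ :=
  Multiset.replicate t 0 + (Finset.Icc 1 n).sum (fun j => Multiset.replicate ν j)

/-!
The largest letter `n + 1` of a Stirling permutation on `{0^t, 1^ν, …, (n+1)^ν}` occurs in a
single block of `ν` consecutive copies: anything between two of its copies would have to be at
least `n + 1`. Deleting that block leaves a Stirling permutation on `{0^t, 1^ν, …, n^ν}`, and
conversely a block of `ν` copies of a new maximum may be inserted into any of the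
`t + nν + 1` gaps of such a word. Hence the count is multiplied by `nν + t + 1` at each step.
Throughout, smoothness is read as: no subword `[a, b, a]` has `b < a`.
-/

open List

theorem List.Sublist.of_cons_sublist_append_of_notMem {α : Type*} {a : α} {s A C : List α}
    (ha : a ∉ A) (h : a :: s <+ A ++ C) : a :: s <+ C := by
  obtain ⟨_ | ⟨b, l₁⟩, l₂, heq, h₁, h₂⟩ := sublist_append_iff.1 h
  · simpa [heq] using h₂
  · obtain ⟨rfl, -⟩ := cons_eq_cons.1 heq
    exact absurd (h₁.subset mem_cons_self) ha

theorem List.filter_ne_append_replicate_append {α : Type*} [DecidableEq α] {A B : List α} {x : α}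
    {k : ℕ} (hA : x ∉ A) (hB : x ∉ B) : (A ++ replicate k x ++ B).filter (· ≠ x) = A ++ B := by
  have hne : ∀ C : List α, x ∉ C → C.filter (· ≠ x) = C := fun C hC =>
    filter_eq_self.2 fun y hy => decide_eq_true (ne_of_mem_of_not_mem hy hC)
  rw [filter_append, filter_append, hne A hA, hne B hB, filter_replicate]
  simp

theorem List.idxOf_append_replicate_append {α : Type*} [DecidableEq α] {A B : List α} {x : α}
    {k : ℕ} (hA : x ∉ A) (hk : 0 < k) : (A ++ replicate k x ++ B).idxOf x = A.length := by
  obtain ⟨k, rfl⟩ := Nat.exists_eq_add_of_lt hk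
  rw [append_assoc, idxOf_append_of_notMem hA, Nat.zero_add, replicate_succ, cons_append,
    idxOf_cons_self, Nat.add_zero]

theorem coe_take_append_replicate_append_drop {α : Type*} (l : List α) (p k : ℕ) (x : α) :
    ((l.take p ++ replicate k x ++ l.drop p : List α) : Multiset α) =
      l + Multiset.replicate k x := by
  rw [← Multiset.coe_replicate, Multiset.coe_add, Multiset.coe_eq_coe, append_assoc]
  exact (perm_append_comm.append_left _).trans (by rw [← append_assoc, take_append_drop])

theorem isSmooth_iff_sublist {l : List ℕ} : IsSmooth l ↔ ∀ a b, [a, b, a] <+ l → a ≤ b := by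
  constructor
  · intro h a b hsub
    obtain ⟨is, his, hinc⟩ := sublist_eq_map_getElem hsub
    rcases is with _ | ⟨i, _ | ⟨m, _ | ⟨k, _ | _⟩⟩⟩ <;> simp at his
    obtain ⟨rfl, rfl, hk⟩ := his
    simp only [pairwise_cons, mem_cons, not_mem_nil] at hinc
    have := h i m k (hinc.1 m (by simp)) (hinc.2.1 k (by simp)) k.2
    simp only [getD_eq_getElem _ _ i.2, getD_eq_getElem _ _ m.2, getD_eq_getElem _ _ k.2] at this
    exact this hk
  · intro h i m k him hmk hk heq
    rw [getD_eq_getElem _ _ (by omega), getD_eq_getElem _ _ (by omega)] at heq ⊢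
    apply h
    simpa [heq] using map_getElem_sublist
      (is := [⟨i, by omega⟩, ⟨m, by omega⟩, ⟨k, hk⟩]) (by simp; omega)

theorem IsSmooth.sublist {l₁ l₂ : List ℕ} (h : IsSmooth l₂) (hsub : l₁ <+ l₂) : IsSmooth l₁ := by
  rw [isSmooth_iff_sublist] at h ⊢
  exact fun a b hab => h a b (hab.trans hsub)

theorem isSmooth_replicate (k c : ℕ) : IsSmooth (replicate k c) :=
  isSmooth_iff_sublist.2 fun a b h => by
    rw [eq_of_mem_replicate (h.subset (mem_cons_self : a ∈ [a, b, a])),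
      eq_of_mem_replicate (h.subset (by simp : b ∈ [a, b, a]))]

theorem IsSmooth.append_replicate_append {A B : List ℕ} {x k : ℕ} (h : IsSmooth (A ++ B))
    (hlt : ∀ y ∈ A ++ B, y < x) : IsSmooth (A ++ replicate k x ++ B) := by
  have hxA : x ∉ A := fun hx => lt_irrefl x (hlt x (mem_append_left B hx))
  have hxB : x ∉ B := fun hx => lt_irrefl x (hlt x (mem_append_right A hx))
  rw [isSmooth_iff_sublist] at h ⊢
  intro a b hsub
  by_cases hb : b = x
  · have ha : a ∈ A ++ replicate k x ++ B := hsub.subset mem_cons_self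
    simp only [mem_append, mem_replicate] at ha
    rcases ha with (ha | ⟨-, rfl⟩) | ha
    · exact hb ▸ (hlt a (mem_append_left B ha)).le
    · exact hb.ge
    · exact hb ▸ (hlt a (mem_append_right A ha)).le
  by_cases ha : a = x
  · subst ha
    -- the two outer copies of `a` lie in the block, hence so does `b`
    have hRB : [a, b, a] <+ replicate k a ++ B := by
      rw [append_assoc] at hsub
      exact hsub.of_cons_sublist_append_of_notMem hxA
    have hR : [a, b, a] <+ replicate k a := by
      have := hRB.reverse
      rw [reverse_append, reverse_replicate] at this
      simpa using this.of_cons_sublist_append_of_notMem (mt mem_reverse.1 hxB)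
    exact absurd (eq_of_mem_replicate (hR.subset (by simp))) hb
  · have := hsub.filter (· ≠ x)
    rw [filter_ne_append_replicate_append hxA hxB] at this
    exact h a b (by simpa [ha, hb] using this)

theorem IsSmooth.exists_eq_append_replicate_append {L : List ℕ} {x : ℕ} (h : IsSmooth L)
    (hle : ∀ y ∈ L, y ≤ x) : ∃ A B, x ∉ A ∧ x ∉ B ∧ L = A ++ replicate (L.count x) x ++ B := by
  induction L with
  | nil => exact ⟨[], [], by simp⟩
  | cons y L ih =>
    obtain ⟨A, B, hA, hB, hL⟩ :=
      ih (h.sublist (sublist_cons_self y L)) fun z hz => hle z (mem_cons_of_mem y hz)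
    by_cases hy : y = x
    · subst hy
      by_cases hyL : y ∈ L
      · obtain _ | ⟨a, A⟩ := A
        · refine ⟨[], B, not_mem_nil, hB, ?_⟩
          rw [count_cons_self, replicate_succ, nil_append, cons_append,
            ← nil_append (replicate _ _), ← hL]
        · obtain ⟨rest, rfl⟩ : ∃ rest, L = a :: rest := ⟨_, hL⟩
          have hay : a ≠ y := fun hay => hA (hay ▸ mem_cons_self)
          have hsub : [y, a, y] <+ y :: a :: rest :=
            cons_sublist_cons.2 (cons_sublist_cons.2 (singleton_sublist.2
              ((mem_cons.1 hyL).resolve_left (Ne.symm hay))))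
          exact absurd (le_antisymm (hle a (by simp)) (isSmooth_iff_sublist.1 h y a hsub)) hay
      · exact ⟨[], L, not_mem_nil, hyL, by simp [count_eq_zero_of_not_mem hyL]⟩
    · refine ⟨y :: A, B, by simp [Ne.symm hy, hA], hB, ?_⟩
      rw [count_cons_of_ne hy, cons_append, cons_append, ← hL]

section stirlingMultiset

variable (ν t : ℕ)

theorem stirlingMultiset_succ (n : ℕ) :
    stirlingMultiset ν t (n + 1) = stirlingMultiset ν t n + Multiset.replicate ν (n + 1) := by
  rw [stirlingMultiset, Finset.sum_Icc_succ_top (Nat.le_add_left 1 n), ← add_assoc]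
  rfl

theorem card_stirlingMultiset (n : ℕ) : Multiset.card (stirlingMultiset ν t n) = t + n * ν := by
  induction n with
  | zero => simp [stirlingMultiset]
  | succ n ih => rw [stirlingMultiset_succ, Multiset.card_add, ih, Multiset.card_replicate]; ring

variable {ν t} in
theorem le_of_mem_stirlingMultiset {n a : ℕ} (h : a ∈ stirlingMultiset ν t n) : a ≤ n := by
  simp only [stirlingMultiset, Multiset.mem_add, Multiset.mem_replicate, Multiset.mem_sum,
    Finset.mem_Icc] at h
  omega

theorem filter_ne_stirlingMultiset_succ (n : ℕ) :
    (stirlingMultiset ν t (n + 1)).filter (· ≠ n + 1) = stirlingMultiset ν t n := by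
  rw [stirlingMultiset_succ, Multiset.filter_add, Multiset.filter_eq_self.2,
    Multiset.filter_eq_nil.2, add_zero]
  · intro a ha; simp [Multiset.eq_of_mem_replicate ha]
  · intro a ha; have := le_of_mem_stirlingMultiset ha; omega

theorem count_stirlingMultiset_succ (n : ℕ) :
    (stirlingMultiset ν t (n + 1)).count (n + 1) = ν := by
  rw [stirlingMultiset_succ, Multiset.count_add, Multiset.count_replicate_self,
    Multiset.count_eq_zero.2 fun h => by have := le_of_mem_stirlingMultiset h; omega, zero_add]

end stirlingMultiset

abbrev StirlingPerm (ν t n : ℕ) : Type :=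
  {l : List ℕ // (l : Multiset ℕ) = stirlingMultiset ν t n ∧ IsSmooth l}

namespace StirlingPerm

variable {ν t n : ℕ}

theorem length_eq (l : StirlingPerm ν t n) : l.1.length = t + n * ν := by
  rw [← Multiset.coe_card, l.2.1, card_stirlingMultiset]

theorem le_of_mem {l : StirlingPerm ν t n} {a : ℕ} (h : a ∈ l.1) : a ≤ n :=
  le_of_mem_stirlingMultiset (l.2.1 ▸ Multiset.mem_coe.2 h)

theorem exists_eq_append_replicate_append (L : StirlingPerm ν t (n + 1)) :
    ∃ A B, n + 1 ∉ A ∧ n + 1 ∉ B ∧ L.1 = A ++ replicate ν (n + 1) ++ B := by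
  have hcount : L.1.count (n + 1) = ν := by
    rw [← Multiset.coe_count, L.2.1, count_stirlingMultiset_succ]
  simpa only [hcount] using L.2.2.exists_eq_append_replicate_append fun _ => L.le_of_mem

def removeMax (L : StirlingPerm ν t (n + 1)) : StirlingPerm ν t n :=
  ⟨L.1.filter (· ≠ n + 1), by rw [← Multiset.filter_coe, L.2.1, filter_ne_stirlingMultiset_succ],
    L.2.2.sublist filter_sublist⟩

def insertMax (p : ℕ) (l : StirlingPerm ν t n) : StirlingPerm ν t (n + 1) :=
  ⟨l.1.take p ++ replicate ν (n + 1) ++ l.1.drop p, by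
    rw [stirlingMultiset_succ, coe_take_append_replicate_append_drop, l.2.1],
    (take_append_drop p l.1).symm ▸ l.2.2 |>.append_replicate_append fun y hy =>
      Nat.lt_succ_of_le (l.le_of_mem ((take_append_drop p l.1) ▸ hy))⟩

theorem card_zero : Nat.card (StirlingPerm ν t 0) = 1 := by
  have hzero : stirlingMultiset ν t 0 = ↑(replicate t 0) := by
    simp [stirlingMultiset, Multiset.coe_replicate]
  rw [Nat.card_eq_one_iff_unique]
  refine ⟨⟨fun l l' => Subtype.ext ?_⟩, ⟨⟨replicate t 0, hzero.symm, isSmooth_replicate t 0⟩⟩⟩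
  have h : ∀ l : StirlingPerm ν t 0, l.1 = replicate t 0 := fun l =>
    perm_replicate.1 (Multiset.coe_eq_coe.1 (l.2.1.trans hzero))
  rw [h l, h l']

def succEquiv (hν : 0 < ν) :
    StirlingPerm ν t (n + 1) ≃ Fin (t + n * ν + 1) × StirlingPerm ν t n where
  toFun L := (⟨L.1.idxOf (n + 1), by
      obtain ⟨A, B, hA, -, hL⟩ := L.exists_eq_append_replicate_append
      have := congrArg length hL
      simp only [L.length_eq, length_append, length_replicate] at this
      rw [hL, idxOf_append_replicate_append hA hν]
      linarith⟩, removeMax L)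
  invFun pl := insertMax pl.1 pl.2
  left_inv L := by
    obtain ⟨A, B, hA, hB, hL⟩ := L.exists_eq_append_replicate_append
    apply Subtype.ext
    simp only [insertMax, removeMax, hL, idxOf_append_replicate_append hA hν,
      filter_ne_append_replicate_append hA hB, take_left, drop_left]
  right_inv := by
    rintro ⟨p, l⟩
    have hx : n + 1 ∉ l.1 := fun h => by have := l.le_of_mem h; omega
    have hp : p ≤ l.1.length := by have := p.2; rw [l.length_eq]; omega
    have hA : n + 1 ∉ l.1.take p := fun h => hx (mem_of_mem_take h)
    have hB : n + 1 ∉ l.1.drop p := fun h => hx (mem_of_mem_drop h)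
    refine Prod.ext (Fin.ext ?_) (Subtype.ext ?_)
    · change idxOf (n + 1) (l.1.take p ++ replicate ν (n + 1) ++ l.1.drop p) = p
      rw [idxOf_append_replicate_append hA hν, length_take, min_eq_left hp]
    · change (l.1.take p ++ replicate ν (n + 1) ++ l.1.drop p).filter (· ≠ n + 1) = l.1
      rw [filter_ne_append_replicate_append hA hB, take_append_drop]

end StirlingPerm

theorem card_stirlingPerm (ν t n : ℕ) (hν : 0 < ν) :
    Nat.card (StirlingPerm ν t n) = ∏ k ∈ Finset.range n, (k * ν + t + 1) := by
  induction n with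
  | zero => exact StirlingPerm.card_zero
  | succ n ih =>
    rw [Nat.card_congr (StirlingPerm.succEquiv hν), Nat.card_prod, ih, Nat.card_eq_fintype_card,
      Fintype.card_fin, Finset.prod_range_succ]
    ring

/-- The number of `(ν,t,[n])`-Stirling permutations equals
`∏_{k=0}^{n-1} (kν + t + 1)`. -/
theorem stmt0 (ν t n : ℕ) (hν : 1 ≤ ν) :
    Nat.card {l : List ℕ // (l : Multiset ℕ) = stirlingMultiset ν t n ∧ IsSmooth l}
      = ∏ k ∈ Finset.range n, (k * ν + t + 1) :=
  card_stirlingPerm ν t n hν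
end

section
/- Define numbers E(n,k) by the recurrence E(n,k) = (k+s)·E(n-1,k) + (νn - k + t + 1 - ν)·E(n-1,k-1) + δ_{k0}δ_{n0}, with E(n,k) = 0 if n < 0 or k < 0. Then the number of (ν,t,[n])-Stirling permutations with exactly k ascents equals E(n,k) with s = 1. -/
/-- The number of ascents of a word. -/
def ascents (l : List ℕ) : ℕ :=
  ((Finset.range (l.length - 1)).filter (fun i => l.getD i 0 < l.getD (i + 1) 0)).card

/-!
The `ν` copies of the largest letter `n + 1` in a `(ν,t,[n+1])`-Stirling permutation form a
single block, since every letter between two of them must be at least `n + 1`. Deleting the block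
leaves a `(ν,t,[n])`-Stirling permutation `w`, and conversely inserting the block into any of the
`νn + t + 1` gaps of such a `w` yields a `(ν,t,[n+1])`-Stirling permutation. Inserting at the
front or into an ascent of `w` keeps the number of ascents, while each of the remaining
`νn + t - asc w` gaps adds one. Counting insertions by the number of ascents gives the recurrence
of the Eulerian numbers.
-/

open Finset

namespace StirlingPermutation

def insertBlock (ν x : ℕ) (w : List ℕ) (i : ℕ) : List ℕ :=
  w.take i ++ List.replicate ν x ++ w.drop i

def ascentSet (l : List ℕ) : Finset ℕ :=
  {i ∈ range (l.length - 1) | l.getD i 0 < l.getD (i + 1) 0}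

lemma card_ascentSet (l : List ℕ) : #(ascentSet l) = ascents l := rfl

lemma ascents_le_length (l : List ℕ) : ascents l ≤ l.length := by
  calc ascents l ≤ #(range (l.length - 1)) := card_filter_le _ _
    _ ≤ l.length := by simp

@[simp] lemma ascents_nil : ascents [] = 0 := rfl

@[simp] lemma ascents_singleton (a : ℕ) : ascents [a] = 0 := rfl

lemma ascents_cons_cons (a b : ℕ) (l : List ℕ) :
    ascents (a :: b :: l) = (if a < b then 1 else 0) + ascents (b :: l) := by
  simp only [ascents, List.length_cons, Nat.add_sub_cancel, card_filter, sum_range_succ',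
    List.getD_cons_succ, List.getD_cons_zero]
  omega

lemma ascents_append_cons (a b : List ℕ) (y : ℕ) :
    ascents (a ++ y :: b) = ascents (a ++ [y]) + ascents (y :: b) := by
  induction a with
  | nil => simp
  | cons c a ih =>
    rcases a with _ | ⟨d, a⟩
    · simp [ascents_cons_cons]
    · simp only [List.cons_append] at ih ⊢
      rw [ascents_cons_cons, ascents_cons_cons, ih]
      omega

lemma ascents_replicate_append {x : ℕ} {v : List ℕ} (hv : ∀ y ∈ v, y < x) (ν : ℕ) :
    ascents (List.replicate ν x ++ v) = ascents v := by
  induction ν with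
  | zero => simp
  | succ ν ih =>
    rcases ν with _ | ν
    · rcases v with _ | ⟨y, v⟩
      · simp
      · simp [ascents_cons_cons, (hv y (by simp)).not_gt]
    · rw [List.replicate_succ, List.cons_append, ← ih, List.replicate_succ, List.cons_append,
        ascents_cons_cons]
      simp

lemma ascents_replicate (ν x : ℕ) : ascents (List.replicate ν x) = 0 := by
  simpa using ascents_replicate_append (v := []) (x := x) (by simp) ν

lemma ascents_cons_of_lt {p x : ℕ} (h : p < x) (l : List ℕ) :
    ascents (p :: x :: l) = ascents (x :: l) + 1 := by
  rw [ascents_cons_cons, if_pos h, add_comm]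

lemma ascents_getD_cons_drop (w : List ℕ) (j : ℕ) :
    ascents (w.getD j 0 :: w.drop (j + 1)) =
      ascents (w.drop (j + 1)) +
        if j + 1 < w.length ∧ w.getD j 0 < w.getD (j + 1) 0 then 1 else 0 := by
  by_cases hj : j + 1 < w.length
  · rw [List.drop_eq_getElem_cons hj, ascents_cons_cons, ← List.getD_eq_getElem _ 0 hj]
    simp [hj, add_comm]
  · rw [List.drop_of_length_le (by omega)]
    simp [hj]

lemma getD_mem {w : List ℕ} {j : ℕ} (hj : j < w.length) : w.getD j 0 ∈ w := by
  rw [List.getD_eq_getElem _ _ hj]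
  exact List.getElem_mem hj

lemma mem_ascentSet {w : List ℕ} {j : ℕ} :
    j ∈ ascentSet w ↔ j + 1 < w.length ∧ w.getD j 0 < w.getD (j + 1) 0 := by
  simp only [ascentSet, mem_filter, mem_range]
  omega

lemma ascents_insertBlock_zero {x : ℕ} {w : List ℕ} (hx : ∀ y ∈ w, y < x) (ν : ℕ) :
    ascents (insertBlock ν x w 0) = ascents w := by
  simp [insertBlock, ascents_replicate_append hx]

lemma ascents_insertBlock_succ {ν x : ℕ} {w : List ℕ} {j : ℕ} (hν : ν ≠ 0)
    (hx : ∀ y ∈ w, y < x) (hj : j < w.length) :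
    ascents (insertBlock ν x w (j + 1)) = ascents w + if j ∈ ascentSet w then 0 else 1 := by
  obtain ⟨p, hp⟩ : ∃ p, w.getD j 0 = p := ⟨_, rfl⟩
  have htake : w.take (j + 1) = w.take j ++ [p] := by
    rw [List.take_add_one, List.getElem?_eq_getElem hj, ← List.getD_eq_getElem _ 0 hj, hp]
    rfl
  have hw : w = w.take j ++ p :: w.drop (j + 1) := by
    rw [← List.singleton_append, ← List.append_assoc, ← htake, List.take_append_drop]
  have hins : insertBlock ν x w (j + 1) =
      w.take j ++ p :: (List.replicate ν x ++ w.drop (j + 1)) := by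
    simp [insertBlock, htake]
  have hdrop : ∀ y ∈ w.drop (j + 1), y < x := fun y hy => hx y (List.mem_of_mem_drop hy)
  obtain ⟨μ, rfl⟩ := Nat.exists_eq_succ_of_ne_zero hν
  have hins_asc : ascents (insertBlock (μ + 1) x w (j + 1)) =
      ascents (w.take j ++ [p]) + ascents (w.drop (j + 1)) + 1 := by
    rw [hins, ascents_append_cons, List.replicate_succ, List.cons_append,
      ascents_cons_of_lt (hx p (hp ▸ getD_mem hj)), ← List.cons_append, ← List.replicate_succ,
      ascents_replicate_append hdrop, add_assoc]
  have hw_asc : ascents w = ascents (w.take j ++ [p]) + ascents (w.drop (j + 1)) +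
      if j + 1 < w.length ∧ p < w.getD (j + 1) 0 then 1 else 0 := by
    rw [hw, ascents_append_cons, ← hp, ascents_getD_cons_drop, hp, ← hw, add_assoc]
  rw [hins_asc, hw_asc]
  simp only [mem_ascentSet, hp]
  split_ifs <;> omega

lemma ascentSet_subset_range (w : List ℕ) : ascentSet w ⊆ range w.length :=
  (filter_subset _ _).trans (range_subset_range.2 (Nat.sub_le _ _))

lemma card_filter_ascents_insertBlock {ν x : ℕ} {w : List ℕ} (hν : ν ≠ 0)
    (hx : ∀ y ∈ w, y < x) (k : ℕ) :
    (#{i ∈ range (w.length + 1) | ascents (insertBlock ν x w i) = k} : ℤ) =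
      (if ascents w = k then (k : ℤ) + 1 else 0) +
        if ascents w + 1 = k then (w.length : ℤ) + 1 - k else 0 := by
  have hsub := ascentSet_subset_range w
  rw [card_filter, sum_range_succ', ascents_insertBlock_zero hx,
    sum_congr rfl fun j hj => by rw [ascents_insertBlock_succ hν hx (mem_range.1 hj)]]
  by_cases hk : ascents w = k
  · subst hk
    have hterm : ∀ j, (if ascents w + (if j ∈ ascentSet w then 0 else 1) = ascents w
        then 1 else 0) = if j ∈ ascentSet w then 1 else 0 := fun j => by split_ifs <;> omega
    rw [sum_congr rfl fun j _ => hterm j, ← card_filter, filter_mem_eq_inter,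
      inter_eq_right.2 hsub, card_ascentSet]
    simp
  · by_cases hk' : ascents w + 1 = k
    · subst hk'
      have hterm : ∀ j, (if ascents w + (if j ∈ ascentSet w then 0 else 1) = ascents w + 1
          then 1 else 0) = if j ∉ ascentSet w then 1 else 0 := fun j => by split_ifs <;> omega
      rw [sum_congr rfl fun j _ => hterm j, ← card_filter, filter_not, filter_mem_eq_inter,
        inter_eq_right.2 hsub, card_sdiff_of_subset hsub, card_ascentSet, card_range]
      simp [ascents_le_length]
    · rw [sum_eq_zero fun j _ => if_neg (by split_ifs <;> omega)]
      simp [hk, hk']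

lemma length_insertBlock (ν x : ℕ) {w : List ℕ} {i : ℕ} (hi : i ≤ w.length) :
    (insertBlock ν x w i).length = w.length + ν := by
  simp [insertBlock]
  omega

lemma getD_insertBlock (ν x : ℕ) {w : List ℕ} {i : ℕ} (hi : i ≤ w.length) (j : ℕ) :
    (insertBlock ν x w i).getD j 0 =
      if j < i then w.getD j 0 else if j < i + ν then x else w.getD (j - ν) 0 := by
  simp only [insertBlock, List.getD_eq_getElem?_getD, List.getElem?_append, List.getElem?_take,
    List.getElem?_replicate, List.getElem?_drop, List.length_append, List.length_take,
    List.length_replicate]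
  split_ifs <;> first | rfl | (congr 2; omega)

lemma getD_le_of_forall_lt {w : List ℕ} {x : ℕ} (hx : ∀ y ∈ w, y < x) (j : ℕ) :
    w.getD j 0 ≤ x := by
  by_cases hj : j < w.length
  · exact (hx _ (getD_mem hj)).le
  · rw [List.getD_eq_default _ _ (by omega)]
    exact Nat.zero_le x

lemma isSmooth_insertBlock {ν x : ℕ} {w : List ℕ} {i : ℕ} (hw : IsSmooth w)
    (hx : ∀ y ∈ w, y < x) (hi : i ≤ w.length) : IsSmooth (insertBlock ν x w i) := by
  set unshift : ℕ → ℕ := fun j => if j < i then j else j - ν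
  have hout : ∀ j, ¬ (i ≤ j ∧ j < i + ν) →
      (insertBlock ν x w i).getD j 0 = w.getD (unshift j) 0 := fun j hj => by
    rw [getD_insertBlock ν x hi]
    simp only [unshift]
    split_ifs <;> first | rfl | omega
  have hin : ∀ j, i ≤ j ∧ j < i + ν → (insertBlock ν x w i).getD j 0 = x := fun j hj => by
    rw [getD_insertBlock ν x hi, if_neg (by omega), if_pos hj.2]
  have hle : ∀ j, (insertBlock ν x w i).getD j 0 ≤ x := fun j => by
    rw [getD_insertBlock ν x hi]
    split_ifs <;> first | exact le_rfl | exact getD_le_of_forall_lt hx _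
  have hmono : ∀ a b, ¬ (i ≤ a ∧ a < i + ν) → ¬ (i ≤ b ∧ b < i + ν) → a < b →
      unshift a < unshift b := fun a b ha hb hab => by
    simp only [unshift]
    split_ifs <;> omega
  have hunshift_lt : ∀ j, ¬ (i ≤ j ∧ j < i + ν) → j < w.length + ν →
      unshift j < w.length := fun j hj hjl => by
    simp only [unshift]
    split_ifs <;> omega
  have hlt : ∀ j, ¬ (i ≤ j ∧ j < i + ν) → j < w.length + ν →
      (insertBlock ν x w i).getD j 0 < x := fun j hj hjl =>
    hout j hj ▸ hx _ (getD_mem (hunshift_lt j hj hjl))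
  intro p m q hpm hmq hq heq
  rw [length_insertBlock ν x hi] at hq
  -- The block holds the largest letter `x`, so either `m` lies in it or none of `p, m, q`
  -- does and the triple comes from `w`.
  by_cases hm : i ≤ m ∧ m < i + ν
  · exact (hin m hm).symm ▸ hle p
  have hp : ¬ (i ≤ p ∧ p < i + ν) := fun hp => by
    have := hlt q (by omega) hq
    rw [← heq, hin p hp] at this
    exact this.false
  have hq' : ¬ (i ≤ q ∧ q < i + ν) := fun hq' => by
    have := hlt p hp (by omega)
    rw [heq, hin q hq'] at this
    exact this.false
  rw [hout p hp, hout q hq'] at heq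
  rw [hout p hp, hout m hm]
  exact hw _ _ _ (hmono p m hp hm hpm) (hmono m q hm hq' hmq) (hunshift_lt q hq' hq) heq

lemma isSmooth_of_sublist {l l' : List ℕ} (h : IsSmooth l) (hsub : l'.Sublist l) :
    IsSmooth l' := by
  obtain ⟨f, hf⟩ := List.sublist_iff_exists_fin_orderEmbedding_get_eq.1 hsub
  have hget : ∀ j (hj : j < l'.length), l'.getD j 0 = l.getD (f ⟨j, hj⟩) 0 := fun j hj => by
    rw [List.getD_eq_getElem _ _ hj, List.getD_eq_getElem _ _ (f ⟨j, hj⟩).2]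
    exact hf ⟨j, hj⟩
  intro i m k him hmk hk heq
  rw [hget i (by omega), hget k hk] at heq
  rw [hget i (by omega), hget m (by omega)]
  exact h _ _ _ (f.strictMono (Fin.mk_lt_mk.2 him)) (f.strictMono (Fin.mk_lt_mk.2 hmk))
    (f ⟨k, hk⟩).2 heq

lemma le_of_isSmooth_cons_cons {x d : ℕ} {l : List ℕ} (h : IsSmooth (x :: d :: l))
    (hx : x ∈ l) : x ≤ d := by
  obtain ⟨j, hj, hlj⟩ := List.mem_iff_getElem.1 hx
  have := h 0 1 (j + 2) (by omega) (by omega) (by simp; omega)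
    (by simp [List.getElem?_eq_getElem hj, hlj])
  simpa using this

lemma exists_eq_append_replicate_append {x : ℕ} {l : List ℕ} (hs : IsSmooth l)
    (hle : ∀ y ∈ l, y ≤ x) :
    ∃ a b, l = a ++ List.replicate (l.count x) x ++ b ∧ x ∉ a ∧ x ∉ b := by
  induction l with
  | nil => exact ⟨[], [], by simp, by simp, by simp⟩
  | cons c l ih =>
    obtain ⟨a, b, hl, hxa, hxb⟩ :=
      ih (isSmooth_of_sublist hs (List.sublist_cons_self c l)) fun y hy => hle y (by simp [hy])
    by_cases hc : c = x
    · subst c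
      rcases a with _ | ⟨d, a⟩
      · refine ⟨[], b, ?_, by simp, hxb⟩
        rw [List.count_cons_self, List.replicate_succ]
        nth_rw 1 [hl]
        simp
      · -- Another `x` in `l` would enclose the letter `d < x` that follows the first one.
        have hxl : x ∉ l := fun hxl => by
          have hdx : d ≠ x := fun h => hxa (by simp [h])
          have hdle : d ≤ x := hle d (List.mem_cons_of_mem _ (by rw [hl]; simp))
          have hcount : 0 < l.count x := List.count_pos_iff.2 hxl
          rw [hl] at hs
          have := le_of_isSmooth_cons_cons hs (by simp; omega)
          omega
        exact ⟨[], l, by simp [List.count_eq_zero_of_not_mem hxl], by simp, hxl⟩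
    · refine ⟨c :: a, b, ?_, by simp [Ne.symm hc, hxa], hxb⟩
      rw [List.count_cons_of_ne hc]
      nth_rw 1 [hl]
      simp

lemma stirlingMultiset_zero (ν t : ℕ) : stirlingMultiset ν t 0 = Multiset.replicate t 0 := by
  simp [stirlingMultiset]

lemma stirlingMultiset_succ (ν t n : ℕ) :
    stirlingMultiset ν t (n + 1) = stirlingMultiset ν t n + Multiset.replicate ν (n + 1) := by
  rw [stirlingMultiset, stirlingMultiset, sum_Icc_succ_top (by omega), add_assoc]

lemma card_stirlingMultiset (ν t n : ℕ) :
    Multiset.card (stirlingMultiset ν t n) = ν * n + t := by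
  induction n with
  | zero => simp [stirlingMultiset_zero]
  | succ n ih => rw [stirlingMultiset_succ, Multiset.card_add, ih, Multiset.card_replicate]; ring

lemma le_of_mem_stirlingMultiset {ν t n a : ℕ} (h : a ∈ stirlingMultiset ν t n) :
    a ≤ n := by
  simp only [stirlingMultiset, Multiset.mem_add, Multiset.mem_sum, mem_Icc] at h
  rcases h with h | ⟨j, hj, h⟩
  · simp [Multiset.eq_of_mem_replicate h]
  · exact Multiset.eq_of_mem_replicate h ▸ hj.2

lemma count_stirlingMultiset_succ (ν t n : ℕ) :
    (stirlingMultiset ν t (n + 1)).count (n + 1) = ν := by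
  rw [stirlingMultiset_succ, Multiset.count_add, Multiset.count_replicate_self,
    Multiset.count_eq_zero.2 fun h => by have := le_of_mem_stirlingMultiset h; omega, zero_add]

lemma coe_insertBlock (ν x : ℕ) (w : List ℕ) (i : ℕ) :
    (insertBlock ν x w i : Multiset ℕ) = w + Multiset.replicate ν x := by
  rw [insertBlock, ← Multiset.coe_add, ← Multiset.coe_add, add_right_comm, Multiset.coe_add,
    List.take_append_drop, Multiset.coe_replicate]

lemma filter_insertBlock {ν x : ℕ} {w : List ℕ} (hx : x ∉ w) (i : ℕ) :
    (insertBlock ν x w i).filter (· ≠ x) = w := by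
  have hw : w.filter (· ≠ x) = w :=
    List.filter_eq_self.2 fun y hy => decide_eq_true fun h : y = x => hx (h ▸ hy)
  rw [insertBlock, List.filter_append, List.filter_append, List.filter_replicate]
  simpa [← List.filter_append] using hw

lemma idxOf_insertBlock {ν x : ℕ} {w : List ℕ} (hν : ν ≠ 0) (hx : x ∉ w) {i : ℕ}
    (hi : i ≤ w.length) : (insertBlock ν x w i).idxOf x = i := by
  obtain ⟨μ, rfl⟩ := Nat.exists_eq_succ_of_ne_zero hν
  have hxt : x ∉ w.take i := fun h => hx (List.mem_of_mem_take h)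
  rw [insertBlock, List.append_assoc, List.idxOf_append, if_neg hxt, List.replicate_succ,
    List.cons_append, List.idxOf_cons_self]
  simp
  omega

section Counting

open Classical in
noncomputable def stirlingPerms (ν t n : ℕ) : Finset (List ℕ) :=
  {l ∈ (stirlingMultiset ν t n).lists.toFinset | IsSmooth l}

variable {ν t n : ℕ}

lemma mem_stirlingPerms {l : List ℕ} :
    l ∈ stirlingPerms ν t n ↔ (l : Multiset ℕ) = stirlingMultiset ν t n ∧ IsSmooth l := by
  simp [stirlingPerms, Multiset.mem_lists_iff, eq_comm]

lemma length_of_mem_stirlingPerms {l : List ℕ} (hl : l ∈ stirlingPerms ν t n) :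
    l.length = ν * n + t := by
  rw [← Multiset.coe_card, (mem_stirlingPerms.1 hl).1, card_stirlingMultiset]

lemma lt_of_mem_of_mem_stirlingPerms {l : List ℕ} (hl : l ∈ stirlingPerms ν t n) {y : ℕ}
    (hy : y ∈ l) : y < n + 1 :=
  Nat.lt_succ_of_le <| le_of_mem_stirlingMultiset <|
    (mem_stirlingPerms.1 hl).1 ▸ Multiset.mem_coe.2 hy

lemma stirlingPerms_zero : stirlingPerms ν t 0 = {List.replicate t 0} := by
  ext l
  rw [mem_stirlingPerms, stirlingMultiset_zero, ← Multiset.coe_replicate, Multiset.coe_eq_coe,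
    List.perm_replicate, mem_singleton, and_iff_left_iff_imp]
  rintro rfl i m k - - - -
  simp [List.getD_eq_getElem?_getD, List.getElem?_replicate]
  split_ifs <;> simp

lemma insertBlock_mem_stirlingPerms_succ {w : List ℕ} (hw : w ∈ stirlingPerms ν t n) {i : ℕ}
    (hi : i ≤ ν * n + t) : insertBlock ν (n + 1) w i ∈ stirlingPerms ν t (n + 1) := by
  rw [← length_of_mem_stirlingPerms hw] at hi
  rw [mem_stirlingPerms, coe_insertBlock, (mem_stirlingPerms.1 hw).1, stirlingMultiset_succ]
  exact ⟨rfl, isSmooth_insertBlock (mem_stirlingPerms.1 hw).2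
    (fun y => lt_of_mem_of_mem_stirlingPerms hw) hi⟩

lemma exists_insertBlock_eq_of_mem_stirlingPerms_succ {l : List ℕ}
    (hl : l ∈ stirlingPerms ν t (n + 1)) :
    ∃ w ∈ stirlingPerms ν t n, ∃ i ≤ ν * n + t, insertBlock ν (n + 1) w i = l := by
  obtain ⟨hcoe, hs⟩ := mem_stirlingPerms.1 hl
  have hcount : l.count (n + 1) = ν := by
    rw [← Multiset.coe_count, hcoe, count_stirlingMultiset_succ]
  obtain ⟨a, b, hab, -, -⟩ := exists_eq_append_replicate_append hs
    fun y hy => Nat.le_of_lt_succ (lt_of_mem_of_mem_stirlingPerms hl hy)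
  rw [hcount] at hab
  subst hab
  have hins : insertBlock ν (n + 1) (a ++ b) a.length = a ++ List.replicate ν (n + 1) ++ b := by
    simp [insertBlock]
  rw [← hins, coe_insertBlock, stirlingMultiset_succ] at hcoe
  have hab : a ++ b ∈ stirlingPerms ν t n := mem_stirlingPerms.2 ⟨add_right_cancel hcoe,
    isSmooth_of_sublist hs ((List.sublist_append_left a _).append (List.Sublist.refl b))⟩
  refine ⟨a ++ b, hab, a.length, ?_, hins⟩
  have := length_of_mem_stirlingPerms hab
  rw [List.length_append] at this
  omega

lemma card_filter_stirlingPerms_succ (hν : ν ≠ 0) (P : List ℕ → Prop)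
    [DecidablePred P] :
    #{l ∈ stirlingPerms ν t (n + 1) | P l} =
      #{p ∈ stirlingPerms ν t n ×ˢ range (ν * n + t + 1) |
        P (insertBlock ν (n + 1) p.1 p.2)} := by
  symm
  apply card_nbij fun p => insertBlock ν (n + 1) p.1 p.2
  · intro p hp
    simp only [coe_filter, mem_product, mem_range, Set.mem_ofPred_eq] at hp ⊢
    exact ⟨insertBlock_mem_stirlingPerms_succ hp.1.1 (by omega), hp.2⟩
  · rintro ⟨w, i⟩ hp ⟨w', i'⟩ hp' h
    simp only [coe_filter, mem_product, mem_range, Set.mem_ofPred_eq] at hp hp' h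
    have hx : ∀ {v}, v ∈ stirlingPerms ν t n → n + 1 ∉ v := fun hv hmem =>
      (lt_of_mem_of_mem_stirlingPerms hv hmem).false
    have hi : ∀ {v j}, v ∈ stirlingPerms ν t n → j < ν * n + t + 1 → j ≤ v.length :=
      fun hv hj => by rw [length_of_mem_stirlingPerms hv]; omega
    rw [Prod.mk.injEq, ← filter_insertBlock (hx hp.1.1) i, h, filter_insertBlock (hx hp'.1.1),
      ← idxOf_insertBlock hν (hx hp.1.1) (hi hp.1.1 hp.1.2), h,
      idxOf_insertBlock hν (hx hp'.1.1) (hi hp'.1.1 hp'.1.2)]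
    exact ⟨rfl, rfl⟩
  · intro l hl
    simp only [coe_filter, Set.mem_ofPred_eq] at hl
    obtain ⟨w, hw, i, hi, rfl⟩ := exists_insertBlock_eq_of_mem_stirlingPerms_succ hl.1
    exact ⟨(w, i), by simp [hw, hl.2]; omega, rfl⟩

lemma card_filter_ascents_stirlingPerms_succ (hν : ν ≠ 0) (k : ℕ) :
    (#{l ∈ stirlingPerms ν t (n + 1) | ascents l = k} : ℤ) =
      ∑ w ∈ stirlingPerms ν t n, ((if ascents w = k then (k : ℤ) + 1 else 0) +
        if ascents w + 1 = k then (ν * n + t : ℤ) + 1 - k else 0) := by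
  rw [card_filter_stirlingPerms_succ hν, card_filter, sum_product, Nat.cast_sum]
  refine sum_congr rfl fun w hw => ?_
  have hlen := length_of_mem_stirlingPerms hw
  rw [← card_filter, ← hlen, card_filter_ascents_insertBlock hν
    fun y => lt_of_mem_of_mem_stirlingPerms hw]
  simp [hlen]

lemma natCard_eq_card_filter_stirlingPerms (k : ℕ) :
    Nat.card {l : List ℕ // (l : Multiset ℕ) = stirlingMultiset ν t n ∧
      IsSmooth l ∧ ascents l = k} = #{l ∈ stirlingPerms ν t n | ascents l = k} := by
  rw [← Nat.card_eq_finsetCard]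
  exact Nat.card_congr <| Equiv.subtypeEquivRight fun l => by
    rw [mem_filter, mem_stirlingPerms, and_assoc]

end Counting

end StirlingPermutation

open StirlingPermutation in
/-- The number of `(ν,t,[n])`-Stirling permutations with exactly `k` ascents
equals the ν-order `(1,t)`-Eulerian number `E n k` defined by the recurrence
`E(n,k) = (k+s)·E(n-1,k) + (νn - k + t + 1 - ν)·E(n-1,k-1) + δ_{k0}δ_{n0}`
with `s = 1` and vanishing for negative indices. -/
theorem stmt1 (ν t n k : ℕ) (hν : 1 ≤ ν) (E : ℕ → ℕ → ℤ)
    (h00 : E 0 0 = 1) (h0k : ∀ k, E 0 (k + 1) = 0)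
    (hn0 : ∀ n, E (n + 1) 0 = (0 + 1) * E n 0)
    (hrec : ∀ n k, E (n + 1) (k + 1) =
      (((k : ℤ) + 1) + 1) * E n (k + 1) +
      ((ν : ℤ) * ((n : ℤ) + 1) - ((k : ℤ) + 1) + (t : ℤ) + 1 - (ν : ℤ)) * E n k) :
    (Nat.card {l : List ℕ // (l : Multiset ℕ) = stirlingMultiset ν t n ∧
        IsSmooth l ∧ ascents l = k} : ℤ) = E n k := by
  rw [natCard_eq_card_filter_stirlingPerms]
  induction n generalizing k with
  | zero =>
    rw [stirlingPerms_zero, filter_singleton, ascents_replicate]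
    rcases k with _ | k <;> simp [h00, h0k]
  | succ n ih =>
    rw [card_filter_ascents_stirlingPerms_succ (by omega), sum_add_distrib]
    simp only [← sum_filter, sum_const, nsmul_eq_mul]
    rcases k with _ | k
    · simp [hn0, ← ih]
    · simp only [add_left_inj]
      rw [hrec, ← ih, ← ih]
      push_cast
      ring
end

section
/- The ν-order (s,t)-Eulerian numbers, defined by the recurrence E(n,k) = (k+s)·E(n-1,k) + (νn - k + t + 1 - ν)·E(n-1,k-1) + δ_{k0}δ_{n0} with E(n,k) = 0 for n < 0 or k < 0, satisfy ∑_{k=0}^{n} E(n,k) = ∏_{j=0}^{n-1} (jν + t + s) for all n ≥ 0. -/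
/-!
Summing the recurrence over `k`, the coefficient of `E(n-1,k)` collects `k + s` from the first
term and `ν n - k - ν + t` from the second (shifted) one; their sum `(n-1)ν + t + s` does not
depend on `k`, so each row sum is the previous one times `(n-1)ν + t + s`. The only boundary term,
`(n + s)·E(n-1,n)`, vanishes because `E` is lower triangular.
-/

section TriangleRecurrence

variable {R : Type*} [Semiring R]

theorem triangle_eq_zero_of_lt {E : ℕ → ℕ → R} {a b : ℕ → ℕ → R}
    (h0k : ∀ k, E 0 (k + 1) = 0)
    (hrec : ∀ n k, E (n + 1) (k + 1) = a n k * E n (k + 1) + b n k * E n k) :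
    ∀ n k, n < k → E n k = 0
  | 0, k + 1, _ => h0k k
  | n + 1, k + 1, h => by
    rw [hrec, triangle_eq_zero_of_lt h0k hrec n k (by omega),
      triangle_eq_zero_of_lt h0k hrec n (k + 1) (by omega), mul_zero, mul_zero, add_zero]

theorem sum_range_succ_succ_of_step {f g a b : ℕ → R} (m : ℕ) (hf : f (m + 1) = 0)
    (hg0 : g 0 = a 0 * f 0) (hg : ∀ k, g (k + 1) = a (k + 1) * f (k + 1) + b k * f k) :
    ∑ k ∈ Finset.range (m + 2), g k = ∑ k ∈ Finset.range (m + 1), (a k + b k) * f k := by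
  have hshift : ∑ k ∈ Finset.range (m + 1), a (k + 1) * f (k + 1) + a 0 * f 0
      = ∑ k ∈ Finset.range (m + 1), a k * f k := by
    rw [← Finset.sum_range_succ' (fun k => a k * f k), Finset.sum_range_succ, hf, mul_zero,
      add_zero]
  simp only [Finset.sum_range_succ' g, hg, hg0, Finset.sum_add_distrib, add_mul]
  rw [add_right_comm, hshift]

end TriangleRecurrence

/-- The row sums of the ν-order `(s,t)`-Eulerian numbers, defined by the
recurrence `E(n,k) = (k+s)·E(n-1,k) + (νn - k + t + 1 - ν)·E(n-1,k-1)
+ δ_{k0}δ_{n0}` (vanishing for negative indices), are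
`∏_{j=0}^{n-1} (jν + t + s)`. -/
theorem stmt2 (ν s t : ℚ) (E : ℕ → ℕ → ℚ)
    (h00 : E 0 0 = 1) (h0k : ∀ k, E 0 (k + 1) = 0)
    (hn0 : ∀ n, E (n + 1) 0 = (0 + s) * E n 0)
    (hrec : ∀ n k : ℕ, E (n + 1) (k + 1) =
      (((k : ℚ) + 1) + s) * E n (k + 1) +
      (ν * ((n : ℚ) + 1) - ((k : ℚ) + 1) + t + 1 - ν) * E n k)
    (n : ℕ) :
    ∑ k ∈ Finset.range (n + 1), E n k = ∏ j ∈ Finset.range n, ((j : ℚ) * ν + t + s) := by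
  induction n with
  | zero => simp [h00]
  | succ n ih =>
    have hrow := sum_range_succ_succ_of_step (a := fun k => (k : ℚ) + s)
      (b := fun k => ν * ((n : ℚ) + 1) - ((k : ℚ) + 1) + t + 1 - ν) n
      (triangle_eq_zero_of_lt h0k hrec n (n + 1) n.lt_succ_self)
      (by simpa using hn0 n) (fun k => by simpa using hrec n k)
    rw [hrow, Finset.prod_range_succ, ← ih, Finset.sum_mul]
    exact Finset.sum_congr rfl fun k _ => by ring
end

section
/- For ν = 1, the (s,t)-Eulerian numbers admit the closed form E(n,k) = (1/k!) · ∑_{j=0}^{k} (-1)^{k-j} · C(k,j) · (n+s+t)^{\underline{k-j}} · (s+t)^{\overline{j}} · (s+j)^n, for n ≥ 0 and 0 ≤ k ≤ n, where x^{\underline{m}} denotes the falling factorial and x^{\overline{m}} the rising factorial. -/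
/-!
Let `S(n,k)` be `k!` times the claimed closed form. Since `(-1)^m x^{↓m} = (-x)^{↑m}`, at `n = 0`
the sum is `∑_j C(k,j) (s+t)^{↑j} (-(s+t))^{↑(k-j)} = 0^{↑k}` by the Vandermonde identity for
rising factorials, which vanishes for `k ≥ 1`. Moreover `S` satisfies
`S(n+1,k+1) = (k+1+s) S(n,k+1) + (k+1)(n-k+t) S(n,k)` summand by summand, the only
combinatorial input being `C(k+1,j)(k+1-j) = (k+1) C(k,j)`. Hence `k! E(n,k) = S(n,k)` by
induction on `n`.
-/

open Finset Polynomial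

section

variable {R : Type*} [CommRing R]

theorem ascPochhammer_eval_add (a b : R) (k : ℕ) :
    (ascPochhammer R k).eval (a + b) = ∑ ij ∈ antidiagonal k,
      (k.choose ij.1 : R) * ((ascPochhammer R ij.1).eval a * (ascPochhammer R ij.2).eval b) := by
  induction k with
  | zero => simp
  | succ k ih =>
    rw [sum_antidiagonal_choose_succ_mul
      (fun i j => (ascPochhammer R i).eval a * (ascPochhammer R j).eval b),
      ascPochhammer_succ_eval, ih, sum_mul, ← sum_add_distrib]
    refine sum_congr rfl fun ij hij => ?_
    rw [HasAntidiagonal.mem_antidiagonal] at hij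
    rw [Nat.choose_symm_of_eq_add hij.symm, ascPochhammer_succ_eval, ascPochhammer_succ_eval,
      ← hij]
    push_cast
    ring

theorem ascPochhammer_succ_eval_left (x : R) (m : ℕ) :
    (ascPochhammer R (m + 1)).eval x = x * (ascPochhammer R m).eval (x + 1) := by
  simp [ascPochhammer_succ_left, eval_comp]

/-- `k!` times the closed form for `E(n,k)`, with `(-1)^m (n+s+t)^{↓m}` written as
`(-(n+s+t))^{↑m}`. -/
noncomputable def eulerianSum (s t : R) (n k : ℕ) : R :=
  ∑ j ∈ range (k + 1), (k.choose j : R) * (ascPochhammer R j).eval (s + t) *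
    (ascPochhammer R (k - j)).eval (-(n + s + t)) * (s + j) ^ n

variable (s t : R)

theorem eulerianSum_zero_zero : eulerianSum s t 0 0 = 1 := by
  simp [eulerianSum]

theorem eulerianSum_zero_succ (k : ℕ) : eulerianSum s t 0 (k + 1) = 0 := by
  have h := ascPochhammer_eval_add (s + t) (-(s + t)) (k + 1)
  rw [add_neg_cancel, ascPochhammer_ne_zero_eval_zero R k.succ_ne_zero,
    Nat.sum_antidiagonal_eq_sum_range_succ
      (fun i j => ((k + 1).choose i : R) *
        ((ascPochhammer R i).eval (s + t) * (ascPochhammer R j).eval (-(s + t))))] at h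
  simpa [eulerianSum, mul_assoc] using h.symm

theorem eulerianSum_succ_zero (n : ℕ) : eulerianSum s t (n + 1) 0 = s * eulerianSum s t n 0 := by
  simp [eulerianSum, pow_succ, mul_comm]

theorem eulerianSum_succ_succ (n k : ℕ) :
    eulerianSum s t (n + 1) (k + 1) =
      (k + 1 + s) * eulerianSum s t n (k + 1) + (k + 1) * (n - k + t) * eulerianSum s t n k := by
  set A : ℕ → R := fun m => (ascPochhammer R m).eval (-(n + s + t))
  have summand (j : ℕ) (hj : j ≤ k) :
      ((k + 1).choose j : R) * (ascPochhammer R j).eval (s + t) *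
          (ascPochhammer R (k + 1 - j)).eval (-((n + 1 : ℕ) + s + t)) * (s + j) ^ (n + 1) =
        (k + 1 + s) * (((k + 1).choose j : R) * (ascPochhammer R j).eval (s + t) *
          A (k + 1 - j) * (s + j) ^ n) +
        (k + 1) * (n - k + t) * ((k.choose j : R) * (ascPochhammer R j).eval (s + t) *
          A (k - j) * (s + j) ^ n) := by
    have hkj : k + 1 - j = k - j + 1 := by omega
    have hchoose : ((k + 1).choose j : R) * ((k - j : ℕ) + 1) = (k + 1) * k.choose j := by
      have h := Nat.choose_mul_succ_eq k j
      rw [hkj] at h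
      exact_mod_cast congrArg (Nat.cast (R := R)) (h.symm.trans (mul_comm _ _))
    have hshift : -(((n + 1 : ℕ) : R) + s + t) + 1 = -(n + s + t) := by push_cast; ring
    rw [hkj, ascPochhammer_succ_eval_left, hshift]
    simp only [A, ascPochhammer_succ_eval]
    rw [Nat.cast_sub hj] at hchoose ⊢
    push_cast
    linear_combination (ascPochhammer R j).eval (s + t) * A (k - j) * (s + j) ^ n *
      (n - k + t) * hchoose
  simp only [eulerianSum]
  rw [sum_range_succ _ (k + 1), sum_range_succ _ (k + 1),
    sum_congr rfl fun j hj => summand j (Nat.lt_succ_iff.mp (mem_range.mp hj)), sum_add_distrib,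
    ← mul_sum, ← mul_sum]
  simp only [A, Nat.sub_self, Nat.choose_self, ascPochhammer_zero, eval_one]
  push_cast
  ring

theorem eulerianSum_eq_sum_descPochhammer (n k : ℕ) :
    eulerianSum s t n k = ∑ j ∈ range (k + 1), (-1 : R) ^ (k - j) * (k.choose j : R) *
      (descPochhammer R (k - j)).eval ((n : R) + s + t) *
      (ascPochhammer R j).eval (s + t) * (s + (j : R)) ^ n := by
  refine sum_congr rfl fun j _ => ?_
  rw [ascPochhammer_eval_neg_eq_descPochhammer]
  ring

end

theorem stmt3_general (s t : ℚ) (E : ℕ → ℕ → ℚ)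
    (h00 : E 0 0 = 1) (h0k : ∀ k, E 0 (k + 1) = 0)
    (hn0 : ∀ n, E (n + 1) 0 = (0 + s) * E n 0)
    (hrec : ∀ n k : ℕ, E (n + 1) (k + 1) =
      (((k : ℚ) + 1) + s) * E n (k + 1) +
      (((n : ℚ) + 1) - ((k : ℚ) + 1) + t) * E n k)
    (n k : ℕ) :
    E n k = (1 / (k.factorial : ℚ)) *
      ∑ j ∈ Finset.range (k + 1),
        (-1 : ℚ) ^ (k - j) * (k.choose j : ℚ) *
          (descPochhammer ℚ (k - j)).eval ((n : ℚ) + s + t) *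
          (ascPochhammer ℚ j).eval (s + t) * (s + (j : ℚ)) ^ n := by
  have closed_form (n k : ℕ) : E n k = eulerianSum s t n k / k.factorial := by
    induction n generalizing k with
    | zero =>
      cases k with
      | zero => rw [h00, eulerianSum_zero_zero, Nat.factorial_zero, Nat.cast_one, div_one]
      | succ k => rw [h0k, eulerianSum_zero_succ, zero_div]
    | succ n ih =>
      cases k with
      | zero => rw [hn0, ih, eulerianSum_succ_zero]; ring
      | succ k =>
        rw [hrec, ih, ih, eulerianSum_succ_succ, Nat.factorial_succ]
        push_cast
        field_simp
        ring
  rw [closed_form, eulerianSum_eq_sum_descPochhammer, one_div_mul_eq_div]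

/-- Closed form for the `(s,t)`-Eulerian numbers (the case `ν = 1`), defined by
`E(n,k) = (k+s)·E(n-1,k) + (n-k+t)·E(n-1,k-1) + δ_{k0}δ_{n0}` with vanishing
for negative indices:
`E(n,k) = (1/k!) ∑_{j=0}^{k} (-1)^{k-j} C(k,j) (n+s+t)^{↓(k-j)} (s+t)^{↑j} (s+j)^n`. -/
theorem stmt3 (s t : ℚ) (E : ℕ → ℕ → ℚ)
    (h00 : E 0 0 = 1) (h0k : ∀ k, E 0 (k + 1) = 0)
    (hn0 : ∀ n, E (n + 1) 0 = (0 + s) * E n 0)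
    (hrec : ∀ n k : ℕ, E (n + 1) (k + 1) =
      (((k : ℚ) + 1) + s) * E n (k + 1) +
      (((n : ℚ) + 1) - ((k : ℚ) + 1) + t) * E n k)
    (n k : ℕ) (hk : k ≤ n) :
    E n k = (1 / (k.factorial : ℚ)) *
      ∑ j ∈ Finset.range (k + 1),
        (-1 : ℚ) ^ (k - j) * (k.choose j : ℚ) *
          (descPochhammer ℚ (k - j)).eval ((n : ℚ) + s + t) *
          (ascPochhammer ℚ j).eval (s + t) * (s + (j : ℚ)) ^ n :=
  stmt3_general s t E h00 h0k hn0 hrec n k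
end

section
/- The (s,-s)-Eulerian numbers satisfy E(n,k) = (-1)^k · C(n,k) · s^n for all n ≥ 0 and 0 ≤ k ≤ n, where E(n,k) is the solution of the recurrence with ν = 1 and t = -s. -/
/-! The closed form `(-1)^k C(n,k) s^n` satisfies the same recurrence and initial values as `E`:
in the recurrence the terms without `s` cancel by `(k+1) C(n,k+1) = (n-k) C(n,k)`, and the terms
with `s` combine by Pascal's rule. -/

/-- A version of `Nat.choose_succ_right_eq` without truncated subtraction; it also holds for
`k > n`, where both binomial coefficients vanish. -/
theorem Nat.cast_choose_succ_right_mul {R : Type*} [CommRing R] (n k : ℕ) :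
    (n.choose (k + 1) : R) * (k + 1) = n.choose k * (n - k) := by
  rcases le_or_gt k n with hkn | hnk
  · have h := congrArg (Nat.cast (R := R)) (Nat.choose_succ_right_eq n k)
    push_cast [Nat.cast_sub hkn] at h
    exact h
  · simp [Nat.choose_eq_zero_of_lt hnk, Nat.choose_eq_zero_of_lt (Nat.lt_succ_of_lt hnk)]

theorem neg_one_pow_mul_choose_mul_pow_succ_succ {R : Type*} [CommRing R] (s : R) (n k : ℕ) :
    (-1 : R) ^ (k + 1) * ((n + 1).choose (k + 1) : R) * s ^ (n + 1) =
      (((k : R) + 1) + s) * ((-1) ^ (k + 1) * (n.choose (k + 1) : R) * s ^ n) +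
      (((n : R) + 1) - ((k : R) + 1) - s) * ((-1) ^ k * (n.choose k : R) * s ^ n) := by
  rw [Nat.choose_succ_succ, Nat.cast_add]
  linear_combination (-1 : R) ^ k * s ^ n * Nat.cast_choose_succ_right_mul (R := R) n k

theorem stmt7_general (s : ℚ) (E : ℕ → ℕ → ℚ)
    (h00 : E 0 0 = 1) (h0k : ∀ k, E 0 (k + 1) = 0)
    (hn0 : ∀ n, E (n + 1) 0 = (0 + s) * E n 0)
    (hrec : ∀ n k : ℕ, E (n + 1) (k + 1) =
      (((k : ℚ) + 1) + s) * E n (k + 1) +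
      (((n : ℚ) + 1) - ((k : ℚ) + 1) - s) * E n k)
    (n k : ℕ) :
    E n k = (-1 : ℚ) ^ k * (n.choose k : ℚ) * s ^ n := by
  induction n generalizing k with
  | zero =>
    cases k with
    | zero => simpa using h00
    | succ k => simp [h0k]
  | succ n ih =>
    cases k with
    | zero => simp [hn0, ih 0, pow_succ, mul_comm]
    | succ k => rw [hrec, ih k, ih (k + 1), neg_one_pow_mul_choose_mul_pow_succ_succ]

/-- The `(s,-s)`-Eulerian numbers (the case `ν = 1`, `t = -s`), defined by
`E(n,k) = (k+s)·E(n-1,k) + (n-k-s)·E(n-1,k-1) + δ_{k0}δ_{n0}` with vanishing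
for negative indices, satisfy `E(n,k) = (-1)^k C(n,k) s^n` (as an identity in
the parameter `s`). -/
theorem stmt7 (s : ℚ) (E : ℕ → ℕ → ℚ)
    (h00 : E 0 0 = 1) (h0k : ∀ k, E 0 (k + 1) = 0)
    (hn0 : ∀ n, E (n + 1) 0 = (0 + s) * E n 0)
    (hrec : ∀ n k : ℕ, E (n + 1) (k + 1) =
      (((k : ℚ) + 1) + s) * E n (k + 1) +
      (((n : ℚ) + 1) - ((k : ℚ) + 1) - s) * E n k)
    (n k : ℕ) (hk : k ≤ n) :
    E n k = (-1 : ℚ) ^ k * (n.choose k : ℚ) * s ^ n :=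
  stmt7_general s E h00 h0k hn0 hrec n k
end

section
/- For all n ≥ 1, the identity ∑_{j=0}^{n} C(n,j) · j! · j / n^{j+1} = 1 holds. -/
/-!
Since `C(n,j) j! = n.descFactorial j`, the `j`-th summand equals `f j - f (j + 1)` for
`f j = n.descFactorial j / n ^ j`: the falling factorial gains the factor `n - j`, leaving
`n - (n - j) = j`. The sum therefore telescopes to `f 0 - f (n + 1) = 1 - 0`.
-/

open Finset

variable {K : Type*} [Field K]

theorem Nat.descFactorial_div_pow_sub_succ (n j : ℕ) (hn : (n : K) ≠ 0) :
    (n.descFactorial j : K) / (n : K) ^ j - (n.descFactorial (j + 1) : K) / (n : K) ^ (j + 1) =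
      (n.descFactorial j : K) * j / (n : K) ^ (j + 1) := by
  rcases le_or_gt j n with hjn | hnj
  · rw [Nat.descFactorial_succ, Nat.cast_mul, Nat.cast_sub hjn]
    field_simp
    ring
  · simp [Nat.descFactorial_eq_zero_iff_lt.mpr hnj]

theorem Nat.sum_range_choose_mul_factorial_mul_div_pow (n : ℕ) (hn : (n : K) ≠ 0) :
    ∑ j ∈ range (n + 1), (n.choose j : K) * (j.factorial : K) * (j : K) / (n : K) ^ (j + 1) = 1 := by
  have hsummand : ∀ j, (n.choose j : K) * (j.factorial : K) * (j : K) / (n : K) ^ (j + 1) =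
      (n.descFactorial j : K) / (n : K) ^ j -
        (n.descFactorial (j + 1) : K) / (n : K) ^ (j + 1) := by
    intro j
    rw [Nat.descFactorial_div_pow_sub_succ n j hn, Nat.descFactorial_eq_factorial_mul_choose,
      Nat.cast_mul, mul_comm (j.factorial : K)]
  rw [sum_congr rfl fun j _ => hsummand j, sum_range_sub', Nat.descFactorial_zero,
    Nat.descFactorial_eq_zero_iff_lt.mpr (Nat.lt_succ_self n)]
  simp only [Nat.cast_one, pow_zero, div_one, Nat.cast_zero, zero_div, sub_zero]

/-- For all `n ≥ 1`, `∑_{j=0}^{n} C(n,j) · j! · j / n^{j+1} = 1`. -/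
theorem stmt8 (n : ℕ) (hn : 1 ≤ n) :
    ∑ j ∈ Finset.range (n + 1),
      (n.choose j : ℚ) * (j.factorial : ℚ) * (j : ℚ) / (n : ℚ) ^ (j + 1) = 1 :=
  Nat.sum_range_choose_mul_factorial_mul_div_pow n (Nat.cast_ne_zero.mpr (by omega))
end

section
/- For all n ≥ 0, the identity ∑_{j=0}^{n} C(n,j) · (j+1)! / (n+1)^{j+1} = 1 holds. -/
/-! The `j`-th term equals `f j - f (j + 1)` with `f j = n (n-1) ⋯ (n-j+1) / (n+1)^j`, so the sum
telescopes to `f 0 - f (n + 1) = 1 - 0`. -/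

theorem Nat.cast_descFactorial_succ {R : Type*} [Ring R] (n j : ℕ) :
    (n.descFactorial (j + 1) : R) = ((n : R) - j) * n.descFactorial j := by
  rcases le_or_gt j n with hjn | hnj
  · rw [Nat.descFactorial_succ, Nat.cast_mul, Nat.cast_sub hjn]
  · simp [Nat.descFactorial_eq_zero_iff_lt.mpr hnj]

theorem choose_mul_factorial_succ_div_eq_sub {K : Type*} [Field K] [CharZero K] (n j : ℕ) :
    (n.choose j : K) * ((j + 1).factorial : K) / ((n : K) + 1) ^ (j + 1)
      = (n.descFactorial j : K) / ((n : K) + 1) ^ j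
        - (n.descFactorial (j + 1) : K) / ((n : K) + 1) ^ (j + 1) := by
  have hn : (n : K) + 1 ≠ 0 := Nat.cast_add_one_ne_zero n
  rw [Nat.cast_descFactorial_succ, Nat.descFactorial_eq_factorial_mul_choose, Nat.factorial_succ]
  push_cast
  field_simp
  ring

/-- For all `n ≥ 0`, `∑_{j=0}^{n} C(n,j) · (j+1)! / (n+1)^{j+1} = 1`. -/
theorem stmt9 (n : ℕ) :
    ∑ j ∈ Finset.range (n + 1),
      (n.choose j : ℚ) * ((j + 1).factorial : ℚ) / ((n : ℚ) + 1) ^ (j + 1) = 1 := by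
  simp_rw [choose_mul_factorial_succ_div_eq_sub]
  rw [Finset.sum_range_sub']
  simp
end

section
/- The second-order Eulerian numbers with standard indexing admit the closed form ⟨⟨n over k⟩⟩ = ∑_{r=0}^{k} (-1)^{k-r} · C(2n+1, k-r) · S(n+r+1, r+1) for n ≥ 0 and 0 ≤ k ≤ n, where S(·,·) denotes Stirling subset numbers (Stirling numbers of the second kind). -/
/-- Stirling numbers of the second kind (Stirling subset numbers). -/
def stirling2 : ℕ → ℕ → ℕ
  | 0, 0 => 1
  | 0, _ + 1 => 0
  | _ + 1, 0 => 0
  | n + 1, k + 1 => (k + 1) * stirling2 n (k + 1) + stirling2 n k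

/-!
With `A n = ∑ r, S(n+r+1, r+1) X^r`, the Stirling recurrence says `(1 - X) A (n+1) = (X A n)'`.
Hence `P n = (1 - X)^(2n+1) A n` satisfies `P (n+1) = (1 - X) (X P n)' + (2n+1) X P n`, whose
coefficients obey the defining recurrence of the second-order Eulerian numbers, and `P 0 = 1`.
So `⟨⟨n, k⟩⟩` is the `k`-th coefficient of `P n`, which is the stated convolution of the
coefficients of `(1 - X)^(2n+1)` with those of `A n`.
-/

open PowerSeries Finset

theorem stirling2_eq_stirlingSecond : stirling2 = Nat.stirlingSecond := by
  funext n k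
  induction n generalizing k with
  | zero => cases k <;> rfl
  | succ n ih =>
    cases k with
    | zero => rfl
    | succ k => rw [stirling2, Nat.stirlingSecond_succ_succ, ih, ih]

section

variable {R : Type*} [CommRing R]

theorem PowerSeries.coeff_one_sub_X_pow (m j : ℕ) :
    coeff j ((1 - X : R⟦X⟧) ^ m) = (-1) ^ j * m.choose j := by
  induction m generalizing j with
  | zero => cases j <;> simp [coeff_one]
  | succ m ih =>
    cases j with
    | zero => simp
    | succ j =>
      rw [pow_succ', sub_mul, one_mul, map_sub, coeff_succ_X_mul, ih, ih,
        Nat.choose_succ_succ']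
      push_cast
      ring

variable (R) in
noncomputable def stirlingSeries (n : ℕ) : R⟦X⟧ :=
  mk fun r => (Nat.stirlingSecond (n + r + 1) (r + 1) : R)

theorem one_sub_X_mul_stirlingSeries_succ (n : ℕ) :
    (1 - X) * stirlingSeries R (n + 1) = d⁄dX R (X * stirlingSeries R n) := by
  ext r
  rw [coeff_derivative, sub_mul, one_mul, map_sub]
  cases r with
  | zero => simp [stirlingSeries, Nat.stirlingSecond_one_right]
  | succ r =>
    simp only [coeff_succ_X_mul, stirlingSeries, coeff_mk]
    rw [show n + 1 + (r + 1) + 1 = n + (r + 1) + 1 + 1 by ring, Nat.stirlingSecond_succ_succ,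
      show n + 1 + r + 1 = n + (r + 1) + 1 by ring]
    push_cast
    ring

variable (R) in
noncomputable def eulerianSeries (n : ℕ) : R⟦X⟧ :=
  (1 - X) ^ (2 * n + 1) * stirlingSeries R n

theorem coeff_eulerianSeries (n k : ℕ) :
    coeff k (eulerianSeries R n) = ∑ r ∈ range (k + 1),
      (-1) ^ (k - r) * ((2 * n + 1).choose (k - r) : R) *
        (Nat.stirlingSecond (n + r + 1) (r + 1) : R) := by
  rw [eulerianSeries, mul_comm, coeff_mul, Nat.sum_antidiagonal_eq_sum_range_succ_mk]
  refine sum_congr rfl fun r _ => ?_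
  rw [stirlingSeries, coeff_mk, coeff_one_sub_X_pow]
  ring

theorem eulerianSeries_zero : eulerianSeries R 0 = 1 := by
  have hA : stirlingSeries R 0 = PowerSeries.mk 1 := by
    ext r
    simp [stirlingSeries, Nat.stirlingSecond_self]
  rw [eulerianSeries, hA, mul_comm]
  simpa using mk_one_mul_one_sub_eq_one (S := R)

theorem eulerianSeries_succ (n : ℕ) :
    eulerianSeries R (n + 1) =
      (1 - X) * d⁄dX R (X * eulerianSeries R n) + C (2 * n + 1 : R) * X * eulerianSeries R n := by
  have hpow : d⁄dX R ((1 - X) ^ (2 * n + 1)) = -C (2 * n + 1 : R) * (1 - X) ^ (2 * n) := by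
    rw [Derivation.leibniz_pow, map_sub, derivative_one, derivative_X,
      Nat.add_sub_cancel, smul_eq_mul, nsmul_eq_mul, map_add, map_mul, map_natCast, map_ofNat,
      map_one]
    push_cast
    ring
  have hX : X * eulerianSeries R n = (1 - X) ^ (2 * n + 1) * (X * stirlingSeries R n) := by
    rw [eulerianSeries]
    ring
  rw [hX, Derivation.leibniz, hpow, eulerianSeries, eulerianSeries,
    ← one_sub_X_mul_stirlingSeries_succ]
  simp only [smul_eq_mul]
  ring

theorem coeff_zero_eulerianSeries_succ (n : ℕ) :
    coeff 0 (eulerianSeries R (n + 1)) = coeff 0 (eulerianSeries R n) := by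
  rw [eulerianSeries_succ]
  simp [sub_mul, mul_assoc]

theorem coeff_succ_eulerianSeries_succ (n k : ℕ) :
    coeff (k + 1) (eulerianSeries R (n + 1)) =
      (k + 2) * coeff (k + 1) (eulerianSeries R n) +
        (2 * n - k) * coeff k (eulerianSeries R n) := by
  rw [eulerianSeries_succ, map_add, sub_mul, one_mul, map_sub, mul_assoc, coeff_C_mul,
    coeff_succ_X_mul, coeff_succ_X_mul, coeff_derivative, coeff_derivative, coeff_succ_X_mul,
    coeff_succ_X_mul]
  push_cast
  ring

end

theorem stmt10_general (E : ℕ → ℕ → ℤ)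
    (h00 : E 0 0 = 1) (h0k : ∀ k, E 0 (k + 1) = 0)
    (hn0 : ∀ n, E (n + 1) 0 = (0 + 1) * E n 0)
    (hrec : ∀ n k : ℕ, E (n + 1) (k + 1) =
      (((k : ℤ) + 1) + 1) * E n (k + 1) +
      (2 * ((n : ℤ) + 1) - 1 - ((k : ℤ) + 1)) * E n k)
    (n k : ℕ) :
    E n k = ∑ r ∈ Finset.range (k + 1),
      (-1 : ℤ) ^ (k - r) * ((2 * n + 1).choose (k - r) : ℤ) *
        (stirling2 (n + r + 1) (r + 1) : ℤ) := by
  have hE : ∀ n k, E n k = coeff k (eulerianSeries ℤ n) := by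
    intro n
    induction n with
    | zero => rintro (_ | k) <;> simp [h00, h0k, eulerianSeries_zero, coeff_one]
    | succ n ih =>
      rintro (_ | k)
      · rw [hn0, coeff_zero_eulerianSeries_succ, ih, zero_add, one_mul]
      · rw [hrec, coeff_succ_eulerianSeries_succ, ih, ih]
        ring
  rw [hE, coeff_eulerianSeries, stirling2_eq_stirlingSecond]

/-- Closed form for the second-order Eulerian numbers with standard indexing,
defined by `⟨⟨n,k⟩⟩ = (k+1)⟨⟨n-1,k⟩⟩ + (2n-1-k)⟨⟨n-1,k-1⟩⟩ + δ_{n0}δ_{k0}`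
(vanishing for negative indices):
`⟨⟨n,k⟩⟩ = ∑_{r=0}^{k} (-1)^{k-r} C(2n+1, k-r) S(n+r+1, r+1)`. -/
theorem stmt10 (E : ℕ → ℕ → ℤ)
    (h00 : E 0 0 = 1) (h0k : ∀ k, E 0 (k + 1) = 0)
    (hn0 : ∀ n, E (n + 1) 0 = (0 + 1) * E n 0)
    (hrec : ∀ n k : ℕ, E (n + 1) (k + 1) =
      (((k : ℤ) + 1) + 1) * E n (k + 1) +
      (2 * ((n : ℤ) + 1) - 1 - ((k : ℤ) + 1)) * E n k)
    (n k : ℕ) (hk : k ≤ n) :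
    E n k = ∑ r ∈ Finset.range (k + 1),
      (-1 : ℤ) ^ (k - r) * ((2 * n + 1).choose (k - r) : ℤ) *
        (stirling2 (n + r + 1) (r + 1) : ℤ) :=
  stmt10_general E h00 h0k hn0 hrec n k
end

section
/- Suppose a(n,k) satisfies a(n,k) = (αn + βk + γ)·a(n-1,k) + (α'n + β'k + γ')·a(n-1,k-1) + δ_{n0}δ_{k0} with a(n,k)=0 for n<0 or k<0, with β ≠ 0, and b(n,k) satisfies the same type of recurrence with the parameters (α, β, γ; α' + β' − αβ'/β, −β', γ' + β' − γβ'/β). Then for all n, k ≥ 0: a(n,k) = ∑_{j=0}^{k} b(n,j) · C(n-j, n-k) · (β'/β)^{k-j} and b(n,k) = ∑_{j=0}^{k} a(n,j) · C(n-j, n-k) · (−β'/β)^{k-j}. -/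
/-!
Put `t = -β'/β`, so that `β' = -β t`. The transform
`a ↦ (n, k) ↦ ∑ⱼ a(n,j) C(n-j, k-j) tᵏ⁻ʲ`, which on row polynomials is
`Aₙ(x) ↦ ∑ⱼ a(n,j) xʲ (1 + t x)ⁿ⁻ʲ`, maps solutions of the recurrence with parameters
`(α, β, γ; α', -β t, γ')` to solutions of the one with parameters
`(α, β, γ; α' + (α - β) t, β t, γ' + (γ - β) t)`: comparing coefficients of `a(n,j)`, this comes
down to Pascal's rule and `(r + 1) C(m, r+1) = (m - r) C(m, r)`. A solution is determined by its
parameters, so `b` is the transform of `a` with `t`; the parameter map with `-t` undoes the one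
with `t`, so `a` is the transform of `b` with `-t`.
-/

open Finset

theorem Nat.cast_choose_succ_right_eq {R : Type*} [Ring R] (m r : ℕ) :
    (m.choose (r + 1) : R) * (r + 1) = m.choose r * (m - r) := by
  rcases le_or_gt r m with h | h
  · simpa [Nat.cast_sub h] using congrArg (Nat.cast : ℕ → R) (Nat.choose_succ_right_eq m r)
  · simp [Nat.choose_eq_zero_of_lt h, Nat.choose_eq_zero_of_lt (Nat.lt_succ_of_lt h)]

variable {R : Type*} [CommRing R]

/-- The Graham–Knuth–Patashnik recurrence, started from `1` at the origin. -/
structure IsGKPTriangle (α β γ α' β' γ' : R) (f : ℕ → ℕ → R) : Prop where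
  zero_zero : f 0 0 = 1
  zero_succ : ∀ k, f 0 (k + 1) = 0
  succ_zero : ∀ n, f (n + 1) 0 = (α * ((n : R) + 1) + γ) * f n 0
  succ_succ : ∀ n k : ℕ, f (n + 1) (k + 1) =
    (α * ((n : R) + 1) + β * ((k : R) + 1) + γ) * f n (k + 1) +
    (α' * ((n : R) + 1) + β' * ((k : R) + 1) + γ') * f n k

namespace IsGKPTriangle

variable {α β γ α' β' γ' : R} {f g : ℕ → ℕ → R}

theorem eq_zero_of_lt (hf : IsGKPTriangle α β γ α' β' γ' f) {n k : ℕ} (h : n < k) :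
    f n k = 0 := by
  induction n generalizing k with
  | zero =>
    obtain ⟨k, rfl⟩ := Nat.exists_eq_succ_of_ne_zero h.ne'
    exact hf.zero_succ k
  | succ n ih =>
    obtain ⟨k, rfl⟩ := Nat.exists_eq_succ_of_ne_zero (Nat.ne_zero_of_lt h)
    rw [hf.succ_succ, ih (by omega), ih (by omega), mul_zero, mul_zero, add_zero]

theorem unique (hf : IsGKPTriangle α β γ α' β' γ' f) (hg : IsGKPTriangle α β γ α' β' γ' g) :
    f = g := by
  funext n k
  induction n generalizing k with
  | zero =>
    cases k with
    | zero => rw [hf.zero_zero, hg.zero_zero]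
    | succ k => rw [hf.zero_succ, hg.zero_succ]
  | succ n ih =>
    cases k with
    | zero => rw [hf.succ_zero, hg.succ_zero, ih]
    | succ k => rw [hf.succ_succ, hg.succ_succ, ih, ih]

theorem sum_succ_mul (hf : IsGKPTriangle α β γ α' β' γ' f) (n m : ℕ) (w : ℕ → R) :
    ∑ j ∈ range (m + 1), f (n + 1) j * w j =
      ∑ j ∈ range (m + 1), (α * ((n : R) + 1) + β * j + γ) * f n j * w j +
      ∑ j ∈ range m, (α' * ((n : R) + 1) + β' * ((j : R) + 1) + γ') * f n j * w (j + 1) := by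
  rw [sum_range_succ', sum_range_succ' _ m, hf.succ_zero]
  simp only [hf.succ_succ, Nat.cast_add, Nat.cast_one, Nat.cast_zero, add_mul, sum_add_distrib]
  ring

end IsGKPTriangle

def binomTransform (t : R) (f : ℕ → ℕ → R) (n k : ℕ) : R :=
  ∑ j ∈ range (k + 1), f n j * ((n - j).choose (k - j) * t ^ (k - j))

theorem binomTransform_zero_right (t : R) (f : ℕ → ℕ → R) (n : ℕ) :
    binomTransform t f n 0 = f n 0 := by
  simp [binomTransform]

theorem binomTransform_eq_zero_of_lt (t : R) {f : ℕ → ℕ → R} (hf : ∀ {n k}, n < k → f n k = 0)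
    {n k : ℕ} (h : n < k) : binomTransform t f n k = 0 := by
  refine sum_eq_zero fun j hj => ?_
  rcases le_or_gt j n with hjn | hjn
  · rw [Nat.choose_eq_zero_of_lt (by omega), Nat.cast_zero, zero_mul, mul_zero]
  · rw [hf hjn, zero_mul]

/-- Since `n - k` truncates, the form with `C(n-j, n-k)` needs a case distinction. -/
theorem binomTransform_eq_sum_ite (t : R) {f : ℕ → ℕ → R} (hf : ∀ {n k}, n < k → f n k = 0)
    (n k : ℕ) :
    binomTransform t f n k = ∑ j ∈ range (k + 1),
      f n j * (if n < k then 0 else ((n - j).choose (n - k) : R)) * t ^ (k - j) := by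
  split_ifs with h
  · simp [binomTransform_eq_zero_of_lt t hf h]
  · refine sum_congr rfl fun j hj => ?_
    rw [mul_assoc, Nat.choose_symm_of_eq_add (show n - j = k - j + (n - k) by
      rw [mem_range] at hj; omega)]

theorem binomTransform_succ_succ_coeff (α β γ α' γ' t : R) {n k j : ℕ} (hjn : j ≤ n)
    (hjk : j ≤ k) :
    (α * ((n : R) + 1) + β * j + γ) * ((n + 1 - j).choose (k + 1 - j) * t ^ (k + 1 - j)) +
      (α' * ((n : R) + 1) + -(β * t) * ((j : R) + 1) + γ') *
        ((n - j).choose (k - j) * t ^ (k - j)) =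
    (α * ((n : R) + 1) + β * ((k : R) + 1) + γ) *
        ((n - j).choose (k + 1 - j) * t ^ (k + 1 - j)) +
      ((α' + (α - β) * t) * ((n : R) + 1) + β * t * ((k : R) + 1) + (γ' + (γ - β) * t)) *
        ((n - j).choose (k - j) * t ^ (k - j)) := by
  obtain ⟨m, rfl⟩ := Nat.exists_eq_add_of_le hjn
  obtain ⟨r, rfl⟩ := Nat.exists_eq_add_of_le hjk
  rw [show j + m + 1 - j = m + 1 by omega, show j + r + 1 - j = r + 1 by omega,
    Nat.add_sub_cancel_left, Nat.add_sub_cancel_left, Nat.choose_succ_succ']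
  push_cast
  linear_combination (-(β * t ^ (r + 1))) * Nat.cast_choose_succ_right_eq (R := R) m r

theorem IsGKPTriangle.binomTransform {α β γ α' γ' t : R} {f : ℕ → ℕ → R}
    (hf : IsGKPTriangle α β γ α' (-(β * t)) γ' f) :
    IsGKPTriangle α β γ (α' + (α - β) * t) (β * t) (γ' + (γ - β) * t) (binomTransform t f) where
  zero_zero := by rw [binomTransform_zero_right, hf.zero_zero]
  zero_succ k := binomTransform_eq_zero_of_lt t hf.eq_zero_of_lt k.succ_pos
  succ_zero n := by simp only [binomTransform_zero_right, hf.succ_zero]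
  succ_succ n k := by
    have hdiag : (α * ((n : R) + 1) + β * ((k + 1 : ℕ) : R) + γ) * f n (k + 1) *
        ((n + 1 - (k + 1)).choose (k + 1 - (k + 1)) * t ^ (k + 1 - (k + 1))) =
        (α * ((n : R) + 1) + β * ((k : R) + 1) + γ) *
          (f n (k + 1) * ((n - (k + 1)).choose (k + 1 - (k + 1)) * t ^ (k + 1 - (k + 1)))) := by
      simp only [Nat.sub_self, Nat.choose_zero_right, pow_zero]
      push_cast
      ring
    have hbelow : ∑ j ∈ range (k + 1),
        ((α * ((n : R) + 1) + β * j + γ) * f n j *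
            ((n + 1 - j).choose (k + 1 - j) * t ^ (k + 1 - j)) +
          (α' * ((n : R) + 1) + -(β * t) * ((j : R) + 1) + γ') * f n j *
            ((n + 1 - (j + 1)).choose (k + 1 - (j + 1)) * t ^ (k + 1 - (j + 1)))) =
        ∑ j ∈ range (k + 1),
        ((α * ((n : R) + 1) + β * ((k : R) + 1) + γ) *
            (f n j * ((n - j).choose (k + 1 - j) * t ^ (k + 1 - j))) +
          ((α' + (α - β) * t) * ((n : R) + 1) + β * t * ((k : R) + 1) + (γ' + (γ - β) * t)) *
            (f n j * ((n - j).choose (k - j) * t ^ (k - j)))) := by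
      refine sum_congr rfl fun j hj => ?_
      rcases le_or_gt j n with hjn | hjn
      · rw [Nat.add_sub_add_right, Nat.add_sub_add_right]
        linear_combination f n j * binomTransform_succ_succ_coeff α β γ α' γ' t hjn
          (Nat.lt_succ_iff.mp (mem_range.mp hj))
      · simp [hf.eq_zero_of_lt hjn]
    rw [sum_add_distrib, sum_add_distrib, ← mul_sum, ← mul_sum] at hbelow
    simp only [_root_.binomTransform]
    rw [hf.sum_succ_mul, sum_range_succ _ (k + 1), sum_range_succ _ (k + 1)]
    linear_combination hbelow + hdiag

/-- Inverse-pair relation between solutions of the two-parameter linear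
recurrence `a(n,k) = (αn+βk+γ)a(n-1,k) + (α'n+β'k+γ')a(n-1,k-1) + δ_{n0}δ_{k0}`
(vanishing for negative indices) with parameter sets
`(α,β,γ;α',β',γ')` and `(α,β,γ; α'+β'-αβ'/β, -β', γ'+β'-γβ'/β)`.
Here the binomial `C(n-j, n-k)` is understood to vanish when `n - k < 0`. -/
theorem stmt12 (α β γ α' β' γ' : ℚ) (hβ : β ≠ 0) (a b : ℕ → ℕ → ℚ)
    (ha00 : a 0 0 = 1) (ha0k : ∀ k, a 0 (k + 1) = 0)
    (han0 : ∀ n, a (n + 1) 0 = (α * ((n : ℚ) + 1) + β * 0 + γ) * a n 0)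
    (harec : ∀ n k : ℕ, a (n + 1) (k + 1) =
      (α * ((n : ℚ) + 1) + β * ((k : ℚ) + 1) + γ) * a n (k + 1) +
      (α' * ((n : ℚ) + 1) + β' * ((k : ℚ) + 1) + γ') * a n k)
    (hb00 : b 0 0 = 1) (hb0k : ∀ k, b 0 (k + 1) = 0)
    (hbn0 : ∀ n, b (n + 1) 0 = (α * ((n : ℚ) + 1) + β * 0 + γ) * b n 0)
    (hbrec : ∀ n k : ℕ, b (n + 1) (k + 1) =
      (α * ((n : ℚ) + 1) + β * ((k : ℚ) + 1) + γ) * b n (k + 1) +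
      ((α' + β' - α * β' / β) * ((n : ℚ) + 1) + (-β') * ((k : ℚ) + 1) +
        (γ' + β' - γ * β' / β)) * b n k)
    (n k : ℕ) :
    a n k = (∑ j ∈ Finset.range (k + 1),
        b n j * (if n < k then 0 else ((n - j).choose (n - k) : ℚ)) * (β' / β) ^ (k - j))
    ∧ b n k = (∑ j ∈ Finset.range (k + 1),
        a n j * (if n < k then 0 else ((n - j).choose (n - k) : ℚ)) * (-(β' / β)) ^ (k - j)) := by
  obtain ⟨t, rfl⟩ : ∃ t, β' = -(β * t) := ⟨-(β' / β), by field_simp⟩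
  have hA : IsGKPTriangle α β γ α' (-(β * t)) γ' a :=
    ⟨ha00, ha0k, by simpa using han0, harec⟩
  have hB : IsGKPTriangle α β γ (α' + (α - β) * t) (β * t) (γ' + (γ - β) * t) b := by
    refine ⟨hb00, hb0k, by simpa using hbn0, fun n k => ?_⟩
    rw [hbrec]
    field_simp
    ring
  have hba : b = binomTransform t a := hB.unique hA.binomTransform
  have hab : a = binomTransform (-t) b := by
    refine hA.unique ?_
    convert (show IsGKPTriangle α β γ _ (-(β * -t)) _ b by rwa [mul_neg, neg_neg]).binomTransform
      using 2 <;> ring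
  have ht : -(β * t) / β = -t := by field_simp
  rw [ht, neg_neg, ← binomTransform_eq_sum_ite _ hB.eq_zero_of_lt,
    ← binomTransform_eq_sum_ite _ hA.eq_zero_of_lt, ← hab, ← hba]
  exact ⟨rfl, rfl⟩
end

section
/- Define the ν-order (s,t)-Ward numbers W(n,k) by W(n,k) = (k+s)·W(n-1,k) + (νn + k + s + t − 1 − ν)·W(n-1,k-1) + δ_{k0}δ_{n0}, with W(n,k)=0 for n<0 or k<0, and let E(n,k) be the (ν+1)-order (s,t)-Eulerian numbers defined by E(n,k) = (k+s)·E(n-1,k) + ((ν+1)n − k + t − ν)·E(n-1,k-1) + δ_{k0}δ_{n0}. Then W(n,k) = ∑_{j=0}^{k} E(n,j)·C(n-j, n-k) and E(n,k) = ∑_{j=0}^{k} (−1)^{k-j}·W(n,j)·C(n-j, n-k) for all n, k ≥ 0. -/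
/-!
Both arrays belong to the family of triangles
`F(n+1,k+1) = (k+1+s) F(n,k+1) + (a n + b k + c) F(n,k)`, `F(n+1,0) = s F(n,0)`, `F(0,k) = δ_{k0}`,
each determined by its parameters. On row polynomials the binomial transform
`G(n,k) = ∑_j x^{k-j} C(n-j,k-j) F(n,j)` is `F_n(y) ↦ (1+xy)^n F_n(y/(1+xy))`, and when `b = -x` it
maps the triangle with parameters `(a, -x, c)` to the one with `(a - x, x, c + x s)`. With `x = 1`
this turns the Eulerian triangle into the Ward triangle, and with `x = -1` the Ward triangle back
into the Eulerian one.
-/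

open Finset

variable {R : Type*} [CommRing R]

structure IsRecTriangle (s a b c : R) (F : ℕ → ℕ → R) : Prop where
  zero_zero : F 0 0 = 1
  zero_succ : ∀ k, F 0 (k + 1) = 0
  succ_zero : ∀ n, F (n + 1) 0 = s * F n 0
  succ_succ : ∀ n k : ℕ,
    F (n + 1) (k + 1) = ((k : R) + 1 + s) * F n (k + 1) + (a * n + b * k + c) * F n k

namespace IsRecTriangle

variable {s a b c : R} {F G : ℕ → ℕ → R}

theorem eq_zero_of_lt (hF : IsRecTriangle s a b c F) : ∀ {n k : ℕ}, n < k → F n k = 0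
  | 0, k + 1, _ => hF.zero_succ k
  | n + 1, k + 1, h => by
    rw [hF.succ_succ, hF.eq_zero_of_lt (by omega), hF.eq_zero_of_lt (by omega)]
    ring

theorem unique (hF : IsRecTriangle s a b c F) (hG : IsRecTriangle s a b c G) : F = G := by
  funext n
  induction n with
  | zero =>
    funext k
    cases k <;> simp [hF.zero_zero, hG.zero_zero, hF.zero_succ, hG.zero_succ]
  | succ n ih =>
    funext k
    cases k <;> simp [hF.succ_zero, hG.succ_zero, hF.succ_succ, hG.succ_succ, ih]

end IsRecTriangle

theorem Nat.succ_mul_choose_succ_add_mul_choose (m i : ℕ) :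
    (i + 1) * m.choose (i + 1) + i * m.choose i = m * m.choose i := by
  rcases le_or_gt i m with h | h
  · rw [mul_comm (i + 1), Nat.choose_succ_right_eq, mul_comm, ← add_mul, Nat.sub_add_cancel h]
  · simp [Nat.choose_eq_zero_of_lt h, Nat.choose_eq_zero_of_lt (h.trans (Nat.lt_succ_self i))]

def binomialTransform (x : R) (F : ℕ → ℕ → R) (n k : ℕ) : R :=
  ∑ j ∈ range (k + 1), x ^ (k - j) * (n - j).choose (k - j) * F n j

/-- The coefficients of `F n j` on the two sides of the transformed recurrence, where
`n = j + m` and `k = j + i`. -/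
theorem binomialTransform_coeff_succ (x a c s : R) (m i j : ℕ) :
    x ^ (i + 1) * (m + 1).choose (i + 1) * (j + s) +
        x ^ i * m.choose i * (a * (m + j) - x * j + c) =
      (i + j + 1 + s) * (x ^ (i + 1) * m.choose (i + 1)) +
        ((a - x) * (m + j) + x * (i + j) + (c + x * s)) * (x ^ i * m.choose i) := by
  have h := congrArg (Nat.cast (R := R)) (Nat.succ_mul_choose_succ_add_mul_choose m i)
  push_cast [Nat.choose_succ_succ'] at h ⊢
  linear_combination (-x ^ (i + 1)) * h

theorem isRecTriangle_binomialTransform {x s a c : R} {F : ℕ → ℕ → R}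
    (hF : IsRecTriangle s a (-x) c F) :
    IsRecTriangle s (a - x) x (c + x * s) (binomialTransform x F) where
  zero_zero := by simp [binomialTransform, hF.zero_zero]
  zero_succ k := sum_eq_zero fun j _ => by cases j <;> simp [hF.zero_succ]
  succ_zero n := by simp [binomialTransform, hF.succ_zero]
  succ_succ n k := by
    set A : ℕ → R := fun j => x ^ (k + 1 - j) * (n + 1 - j).choose (k + 1 - j) * (j + s) * F n j
    set B : ℕ → R := fun j => x ^ (k - j) * (n - j).choose (k - j) * (a * n - x * j + c) * F n j
    set C : ℕ → R := fun j => (k + 1 + s) * (x ^ (k + 1 - j) * (n - j).choose (k + 1 - j) * F n j)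
    set D : ℕ → R := fun j => ((a - x) * n + x * k + (c + x * s)) *
      (x ^ (k - j) * (n - j).choose (k - j) * F n j)
    have hterm : ∀ j ∈ range (k + 1), A j + B j = C j + D j := by
      intro j hj
      rcases le_or_gt j n with hjn | hnj
      · obtain ⟨m, rfl⟩ := Nat.exists_eq_add_of_le hjn
        obtain ⟨i, rfl⟩ := Nat.exists_eq_add_of_le (Nat.lt_succ_iff.mp (mem_range.mp hj))
        have e1 : j + m + 1 - j = m + 1 := by omega
        have e2 : j + i + 1 - j = i + 1 := by omega
        simp only [A, B, C, D, e1, e2, Nat.add_sub_cancel_left]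
        push_cast
        linear_combination F (j + m) j * binomialTransform_coeff_succ x a c s m i j
      · simp [A, B, C, D, hF.eq_zero_of_lt hnj]
    calc binomialTransform x F (n + 1) (k + 1)
        = ∑ j ∈ range (k + 2), A j + ∑ j ∈ range (k + 1), B j := by
          rw [binomialTransform, sum_range_succ', sum_range_succ' A]
          simp only [A, B, Nat.add_sub_add_right, hF.succ_succ, hF.succ_zero]
          rw [add_right_comm, ← sum_add_distrib]
          congr 1
          · exact sum_congr rfl fun j _ => by push_cast; ring
          · simp only [Nat.cast_zero, zero_add]; ring
      _ = ∑ j ∈ range (k + 1), (A j + B j) + A (k + 1) := by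
          rw [sum_range_succ, sum_add_distrib]; ring
      _ = ∑ j ∈ range (k + 1), (C j + D j) + C (k + 1) := by
          rw [sum_congr rfl hterm]
          simp [A, C]
      _ = _ := by
          rw [sum_add_distrib, binomialTransform, binomialTransform, sum_range_succ _ (k + 1),
            mul_add, mul_sum, mul_sum]
          simp only [C, D, tsub_self, pow_zero, Nat.choose_zero_right, Nat.cast_one, mul_one,
            one_mul]
          ring

theorem binomialTransform_eq_sum_ite {x : R} {F : ℕ → ℕ → R}
    (hF : ∀ n k, n < k → F n k = 0) (n k : ℕ) :
    binomialTransform x F n k = ∑ j ∈ range (k + 1),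
      x ^ (k - j) * F n j * (if n < k then 0 else ((n - j).choose (n - k) : R)) := by
  rw [binomialTransform]
  split_ifs with hnk
  · simp only [mul_zero, sum_const_zero]
    refine sum_eq_zero fun j _ => ?_
    rcases le_or_gt j n with hjn | hnj
    · simp [Nat.choose_eq_zero_of_lt (by omega : n - j < k - j)]
    · simp [hF n j hnj]
  · refine sum_congr rfl fun j hj => ?_
    have hjk := Nat.lt_succ_iff.mp (mem_range.mp hj)
    rw [Nat.choose_symm_of_eq_add (by omega : n - j = k - j + (n - k))]
    ring

theorem stmt13_general (ν : ℕ) (s t : ℚ) (W E : ℕ → ℕ → ℚ)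
    (hW00 : W 0 0 = 1) (hW0k : ∀ k, W 0 (k + 1) = 0)
    (hWn0 : ∀ n, W (n + 1) 0 = (0 + s) * W n 0)
    (hWrec : ∀ n k : ℕ, W (n + 1) (k + 1) =
      (((k : ℚ) + 1) + s) * W n (k + 1) +
      ((ν : ℚ) * ((n : ℚ) + 1) + ((k : ℚ) + 1) + s + t - 1 - (ν : ℚ)) * W n k)
    (hE00 : E 0 0 = 1) (hE0k : ∀ k, E 0 (k + 1) = 0)
    (hEn0 : ∀ n, E (n + 1) 0 = (0 + s) * E n 0)
    (hErec : ∀ n k : ℕ, E (n + 1) (k + 1) =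
      (((k : ℚ) + 1) + s) * E n (k + 1) +
      (((ν : ℚ) + 1) * ((n : ℚ) + 1) - ((k : ℚ) + 1) + t - (ν : ℚ)) * E n k)
    (n k : ℕ) :
    W n k = (∑ j ∈ Finset.range (k + 1),
        E n j * (if n < k then 0 else ((n - j).choose (n - k) : ℚ)))
    ∧ E n k = (∑ j ∈ Finset.range (k + 1),
        (-1 : ℚ) ^ (k - j) * W n j * (if n < k then 0 else ((n - j).choose (n - k) : ℚ))) := by
  have hW : IsRecTriangle s ν 1 (s + t) W :=
    ⟨hW00, hW0k, by simpa using hWn0, fun n k => by rw [hWrec]; ring⟩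
  have hE : IsRecTriangle s (ν + 1) (-1) t E :=
    ⟨hE00, hE0k, by simpa using hEn0, fun n k => by rw [hErec]; ring⟩
  have hWE : W = binomialTransform 1 E :=
    hW.unique (by convert isRecTriangle_binomialTransform hE using 1 <;> ring)
  have hEW : E = binomialTransform (-1) W :=
    hE.unique (by
      convert isRecTriangle_binomialTransform (x := -1) (by rwa [neg_neg] : IsRecTriangle s ν _ _ W)
        using 1 <;> ring)
  constructor
  · rw [congrFun₂ hWE n k, binomialTransform_eq_sum_ite (fun _ _ => hE.eq_zero_of_lt)]
    simp only [one_pow, one_mul]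
  · rw [congrFun₂ hEW n k, binomialTransform_eq_sum_ite (fun _ _ => hW.eq_zero_of_lt)]

/-- The ν-order `(s,t)`-Ward numbers `W`, defined by
`W(n,k) = (k+s)W(n-1,k) + (νn+k+s+t-1-ν)W(n-1,k-1) + δ_{k0}δ_{n0}`, and the
`(ν+1)`-order `(s,t)`-Eulerian numbers `E`, defined by
`E(n,k) = (k+s)E(n-1,k) + ((ν+1)n-k+t-ν)E(n-1,k-1) + δ_{k0}δ_{n0}` (both
vanishing for negative indices), form an inverse pair:
`W(n,k) = ∑_j E(n,j) C(n-j,n-k)` and `E(n,k) = ∑_j (-1)^{k-j} W(n,j) C(n-j,n-k)`,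
where `C(n-j, n-k)` is understood to vanish when `n - k < 0`. -/
theorem stmt13 (ν : ℕ) (hν : 1 ≤ ν) (s t : ℚ) (W E : ℕ → ℕ → ℚ)
    (hW00 : W 0 0 = 1) (hW0k : ∀ k, W 0 (k + 1) = 0)
    (hWn0 : ∀ n, W (n + 1) 0 = (0 + s) * W n 0)
    (hWrec : ∀ n k : ℕ, W (n + 1) (k + 1) =
      (((k : ℚ) + 1) + s) * W n (k + 1) +
      ((ν : ℚ) * ((n : ℚ) + 1) + ((k : ℚ) + 1) + s + t - 1 - (ν : ℚ)) * W n k)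
    (hE00 : E 0 0 = 1) (hE0k : ∀ k, E 0 (k + 1) = 0)
    (hEn0 : ∀ n, E (n + 1) 0 = (0 + s) * E n 0)
    (hErec : ∀ n k : ℕ, E (n + 1) (k + 1) =
      (((k : ℚ) + 1) + s) * E n (k + 1) +
      (((ν : ℚ) + 1) * ((n : ℚ) + 1) - ((k : ℚ) + 1) + t - (ν : ℚ)) * E n k)
    (n k : ℕ) :
    W n k = (∑ j ∈ Finset.range (k + 1),
        E n j * (if n < k then 0 else ((n - j).choose (n - k) : ℚ)))
    ∧ E n k = (∑ j ∈ Finset.range (k + 1),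
        (-1 : ℚ) ^ (k - j) * W n j * (if n < k then 0 else ((n - j).choose (n - k) : ℚ))) :=
  stmt13_general ν s t W E hW00 hW0k hWn0 hWrec hE00 hE0k hEn0 hErec n k
end

section
/- The second-order Eulerian numbers with traditional indexing satisfy B(n,k) = ∑_{j=0}^{k} (−1)^{k-j} · {n+j over j}_{≥2} · C(n−j, k−j), where {m over j}_{≥2} counts partitions of an m-set into j blocks each of size at least 2. -/
/-
Both sides satisfy the recurrence that defines `B`. For the right-hand side this comes down,
coefficient by coefficient, to Pascal's rule and the absorption identity, together with the
recurrence `{m+2 over k+1}_{≥2} = (k+1) {m+1 over k+1}_{≥2} + (m+1) {m over k}_{≥2}`.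
The latter is seen by deleting a fixed element `x`: if the part of `x` has at least three
elements, deleting `x` from it leaves a partition of the remaining `m+1` elements together with
one of its `k+1` parts; otherwise the part of `x` is a pair `{x, y}`, and deleting it leaves a
partition of the remaining `m` elements, for one of `m+1` choices of `y`.
-/

/-- The associated Stirling subset number `{m over k}_{≥2}`: the number of
partitions of an `m`-element set into `k` blocks, each of size at least 2. -/
noncomputable def assocStirling (m k : ℕ) : ℕ :=
  Nat.card {P : Finpartition (Finset.univ : Finset (Fin m)) //
    P.parts.card = k ∧ ∀ p ∈ P.parts, 2 ≤ p.card}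

open Finset

variable {α β : Type*} [DecidableEq α] [DecidableEq β] {s t b c : Finset α} {x : α}

def assocPartitions (s : Finset α) (k : ℕ) : Finset (Finpartition s) :=
  {P | #P.parts = k ∧ ∀ p ∈ P.parts, 2 ≤ #p}

lemma mem_assocPartitions {k : ℕ} {P : Finpartition s} :
    P ∈ assocPartitions s k ↔ #P.parts = k ∧ ∀ p ∈ P.parts, 2 ≤ #p := by
  simp [assocPartitions]

namespace Finpartition

def mapOfEmbedding (f : α ↪ β) (P : Finpartition s) : Finpartition (s.map f) where
  parts := P.parts.map (mapEmbedding f).toEmbedding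
  supIndep := supIndep_map.2 <| supIndep_iff_pairwiseDisjoint.2 fun a ha b hb hab => by
    simpa [Function.onFun] using P.disjoint ha hb hab
  sup_parts := by
    rw [sup_map]
    exact P.sup_parts_apply (fun _ _ => map_union _ _) (map_empty _)
  bot_notMem := by simp

lemma exists_mapOfEmbedding_eq (f : α ↪ β) (Q : Finpartition (s.map f)) :
    ∃ P : Finpartition s, P.mapOfEmbedding f = Q := by
  have hQ : ∀ q ∈ Q.parts, (q.preimage f f.injective.injOn).map f = q := fun q hq => by
    obtain ⟨u, -, rfl⟩ := subset_map_iff.1 (Q.le hq)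
    simp
  refine ⟨ofExistsUnique (Q.parts.image fun q => q.preimage f f.injective.injOn)
    ?_ ?_ ?_, ?_⟩
  · simp only [mem_image, forall_exists_index, and_imp, forall_apply_eq_imp_iff₂]
    exact fun q hq => preimage_subset (Q.le hq)
  · intro a ha
    obtain ⟨q, ⟨hq, haq⟩, huniq⟩ := Q.existsUnique_mem (mem_map_of_mem f ha)
    refine ⟨q.preimage f f.injective.injOn, ⟨mem_image_of_mem _ hq, by simpa⟩, ?_⟩
    rintro _ ⟨hp', hap⟩
    obtain ⟨p, hp, rfl⟩ := mem_image.1 hp'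
    rw [huniq p ⟨hp, by simpa using hap⟩]
  · simp only [mem_image, not_exists, not_and]
    intro q hq h
    exact Q.ne_empty hq (by rw [← hQ q hq, h, map_empty])
  · ext q
    simp only [mapOfEmbedding, mem_map, mem_image, ofExistsUnique_parts,
      RelEmbedding.coe_toEmbedding, mapEmbedding_apply]
    constructor
    · rintro ⟨_, ⟨p, hp, rfl⟩, rfl⟩
      rwa [hQ p hp]
    · exact fun hq => ⟨_, ⟨q, hq, rfl⟩, hQ q hq⟩

lemma parts_avoid_of_mem (P : Finpartition s) (hb : b ∈ P.parts) :
    (P.avoid b).parts = P.parts.erase b := by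
  ext c
  rw [mem_avoid, mem_erase]
  constructor
  · rintro ⟨d, hd, hdb, rfl⟩
    have hne : d ≠ b := by rintro rfl; exact hdb le_rfl
    rw [sdiff_eq_self_of_disjoint (show Disjoint d b from P.disjoint hd hb hne)]
    exact ⟨hne, hd⟩
  · rintro ⟨hne, hc⟩
    have hdisj : Disjoint c b := P.disjoint hc hb hne
    refine ⟨c, hc, fun hcb => P.ne_empty hc ?_, sdiff_eq_self_of_disjoint hdisj⟩
    exact disjoint_self.1 (hdisj.mono_right hcb)

def replacePart (P : Finpartition s) (b : Finset α) (hc : c.Nonempty)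
    (hdisj : Disjoint (s \ b) c) (ht : s \ b ∪ c = t) : Finpartition t :=
  (P.avoid b).extend hc.ne_empty hdisj ht

lemma parts_replacePart (P : Finpartition s) (hb : b ∈ P.parts) (hc : c.Nonempty)
    (hdisj : Disjoint (s \ b) c) (ht : s \ b ∪ c = t) :
    (P.replacePart b hc hdisj ht).parts = insert c (P.parts.erase b) := by
  rw [replacePart, extend_parts, parts_avoid_of_mem _ hb]

def addPart (Q : Finpartition (s \ c)) (hc : c.Nonempty) (hcs : c ⊆ s) : Finpartition s :=
  Q.extend hc.ne_empty sdiff_disjoint (sdiff_union_of_subset hcs)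

lemma parts_addPart (Q : Finpartition (s \ c)) (hc : c.Nonempty) (hcs : c ⊆ s) :
    (Q.addPart hc hcs).parts = insert c Q.parts :=
  extend_parts _ _ _ _

lemma part_addPart (Q : Finpartition (s \ c)) (hc : c.Nonempty) (hcs : c ⊆ s) (hx : x ∈ c) :
    (Q.addPart hc hcs).part x = c :=
  part_eq_of_mem _ (by rw [parts_addPart]; exact mem_insert_self _ _) hx

lemma notMem_parts_of_sdiff (Q : Finpartition (s \ c)) (hc : c.Nonempty) : c ∉ Q.parts := by
  intro h
  obtain ⟨a, ha⟩ := hc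
  exact (mem_sdiff.1 (Q.le h ha)).2 ha

lemma avoid_addPart (Q : Finpartition (s \ c)) (hc : c.Nonempty) (hcs : c ⊆ s) :
    (Q.addPart hc hcs).avoid c = Q := by
  ext : 1
  rw [parts_avoid_of_mem _ (by rw [parts_addPart]; exact mem_insert_self _ _), parts_addPart,
    erase_insert (Q.notMem_parts_of_sdiff hc)]

lemma addPart_avoid (P : Finpartition s) (hc : c ∈ P.parts) :
    (P.avoid c).addPart (P.nonempty_of_mem_parts hc) (P.le hc) = P := by
  ext : 1
  rw [parts_addPart, parts_avoid_of_mem _ hc, insert_erase hc]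

lemma part_erase_notMem_parts (P : Finpartition s) (hx : x ∈ s) (h : 2 ≤ #(P.part x)) :
    (P.part x).erase x ∉ P.parts := by
  intro hp
  obtain ⟨a, ha⟩ : ((P.part x).erase x).Nonempty := by
    rw [← card_pos, card_erase_of_mem (P.mem_part_self.2 hx)]; omega
  have := P.eq_of_mem_parts hp (P.part_mem.2 hx) ha (mem_of_mem_erase ha)
  exact notMem_erase x _ (this ▸ P.mem_part_self.2 hx)

def eraseFromPart (P : Finpartition s) (hx : x ∈ s) (h : 2 ≤ #(P.part x)) :
    Finpartition (s.erase x) :=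
  P.replacePart (P.part x) (c := (P.part x).erase x)
    (card_pos.1 (by rw [card_erase_of_mem (P.mem_part_self.2 hx)]; omega))
    (sdiff_disjoint.mono_right (erase_subset _ _))
    (by
      have := P.mem_part_self.2 hx
      have := P.part_subset x
      grind)

lemma parts_eraseFromPart (P : Finpartition s) (hx : x ∈ s) (h : 2 ≤ #(P.part x)) :
    (P.eraseFromPart hx h).parts = insert ((P.part x).erase x) (P.parts.erase (P.part x)) :=
  P.parts_replacePart (P.part_mem.2 hx) _ _ _

lemma notMem_of_mem_parts_erase (Q : Finpartition (s.erase x)) (hb : b ∈ Q.parts) : x ∉ b :=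
  fun h => notMem_erase x s (Q.le hb h)

lemma insert_notMem_parts_erase (Q : Finpartition (s.erase x)) (b : Finset α) :
    insert x b ∉ Q.parts :=
  fun h => notMem_erase x s (Q.le h (mem_insert_self x b))

def insertIntoPart (Q : Finpartition (s.erase x)) (hx : x ∈ s) (hb : b ∈ Q.parts) :
    Finpartition s :=
  Q.replacePart b (c := insert x b) (insert_nonempty x b)
    (disjoint_insert_right.2 ⟨by simp, sdiff_disjoint⟩)
    (by
      have := Q.le hb
      grind)

lemma parts_insertIntoPart (Q : Finpartition (s.erase x)) (hx : x ∈ s) (hb : b ∈ Q.parts) :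
    (Q.insertIntoPart hx hb).parts = insert (insert x b) (Q.parts.erase b) :=
  Q.parts_replacePart hb _ _ _

lemma part_insertIntoPart (Q : Finpartition (s.erase x)) (hx : x ∈ s) (hb : b ∈ Q.parts) :
    (Q.insertIntoPart hx hb).part x = insert x b :=
  part_eq_of_mem _ (by rw [parts_insertIntoPart]; exact mem_insert_self _ _) (mem_insert_self _ _)

lemma card_part_insertIntoPart (Q : Finpartition (s.erase x)) (hx : x ∈ s)
    (hb : b ∈ Q.parts) : #((Q.insertIntoPart hx hb).part x) = #b + 1 := by
  rw [part_insertIntoPart, card_insert_of_notMem (Q.notMem_of_mem_parts_erase hb)]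

lemma two_le_card_part_insertIntoPart (Q : Finpartition (s.erase x)) (hx : x ∈ s)
    (hb : b ∈ Q.parts) : 2 ≤ #((Q.insertIntoPart hx hb).part x) := by
  rw [card_part_insertIntoPart, Nat.succ_le_succ_iff, one_le_card]
  exact Q.nonempty_of_mem_parts hb

lemma insertIntoPart_eraseFromPart (P : Finpartition s) (hx : x ∈ s) (h : 2 ≤ #(P.part x))
    (hb : (P.part x).erase x ∈ (P.eraseFromPart hx h).parts) :
    (P.eraseFromPart hx h).insertIntoPart hx hb = P := by
  ext : 1
  rw [parts_insertIntoPart, parts_eraseFromPart,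
    erase_insert (fun h' => P.part_erase_notMem_parts hx h (mem_of_mem_erase h')),
    insert_erase (P.mem_part_self.2 hx), insert_erase (P.part_mem.2 hx)]

lemma eraseFromPart_insertIntoPart (Q : Finpartition (s.erase x)) (hx : x ∈ s)
    (hb : b ∈ Q.parts) (h : 2 ≤ #((Q.insertIntoPart hx hb).part x)) :
    (Q.insertIntoPart hx hb).eraseFromPart hx h = Q := by
  ext : 1
  have hxb := Q.notMem_of_mem_parts_erase hb
  rw [parts_eraseFromPart, part_insertIntoPart, parts_insertIntoPart, erase_insert hxb,
    erase_insert (fun h' => Q.insert_notMem_parts_erase b (mem_of_mem_erase h')), insert_erase hb]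

variable {k : ℕ}

lemma mapOfEmbedding_mem_assocPartitions {f : α ↪ β} {P : Finpartition s} :
    P.mapOfEmbedding f ∈ assocPartitions (s.map f) k ↔ P ∈ assocPartitions s k := by
  simp [mem_assocPartitions, mapOfEmbedding]

lemma eraseFromPart_mem_assocPartitions {P : Finpartition s} (hP : P ∈ assocPartitions s k)
    (hx : x ∈ s) (h3 : 3 ≤ #(P.part x)) :
    P.eraseFromPart hx (Nat.le_of_succ_le h3) ∈ assocPartitions (s.erase x) k := by
  obtain ⟨hcard, hsize⟩ := mem_assocPartitions.1 hP
  rw [mem_assocPartitions, parts_eraseFromPart]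
  refine ⟨?_, forall_mem_insert _ _ _ |>.2 ⟨?_, fun p hp => hsize p (mem_of_mem_erase hp)⟩⟩
  · rw [card_insert_of_notMem fun h => P.part_erase_notMem_parts hx (Nat.le_of_succ_le h3)
      (mem_of_mem_erase h), card_erase_add_one (P.part_mem.2 hx), hcard]
  · rw [card_erase_of_mem (P.mem_part_self.2 hx)]
    omega

lemma insertIntoPart_mem_assocPartitions {Q : Finpartition (s.erase x)}
    (hQ : Q ∈ assocPartitions (s.erase x) k) (hx : x ∈ s) (hb : b ∈ Q.parts) :
    Q.insertIntoPart hx hb ∈ assocPartitions s k := by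
  obtain ⟨hcard, hsize⟩ := mem_assocPartitions.1 hQ
  rw [mem_assocPartitions, parts_insertIntoPart]
  refine ⟨?_, forall_mem_insert _ _ _ |>.2 ⟨?_, fun p hp => hsize p (mem_of_mem_erase hp)⟩⟩
  · rw [card_insert_of_notMem fun h => Q.insert_notMem_parts_erase _ (mem_of_mem_erase h),
      card_erase_add_one hb, hcard]
  · rw [card_insert_of_notMem (Q.notMem_of_mem_parts_erase hb)]
    exact Nat.le_succ_of_le (hsize b hb)

lemma addPart_mem_assocPartitions {Q : Finpartition (s \ c)} (hQ : Q ∈ assocPartitions (s \ c) k)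
    (hc : c.Nonempty) (hcs : c ⊆ s) (hc2 : 2 ≤ #c) :
    Q.addPart hc hcs ∈ assocPartitions s (k + 1) := by
  obtain ⟨hcard, hsize⟩ := mem_assocPartitions.1 hQ
  rw [mem_assocPartitions, parts_addPart, card_insert_of_notMem (Q.notMem_parts_of_sdiff hc), hcard]
  exact ⟨rfl, forall_mem_insert _ _ _ |>.2 ⟨hc2, hsize⟩⟩

lemma avoid_mem_assocPartitions {P : Finpartition s} (hP : P ∈ assocPartitions s (k + 1))
    (hc : c ∈ P.parts) : P.avoid c ∈ assocPartitions (s \ c) k := by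
  obtain ⟨hcard, hsize⟩ := mem_assocPartitions.1 hP
  rw [mem_assocPartitions, parts_avoid_of_mem _ hc, card_erase_of_mem hc, hcard]
  exact ⟨rfl, fun p hp => hsize p (mem_of_mem_erase hp)⟩

end Finpartition

open Finpartition in
lemma card_assocPartitions_map (f : α ↪ β) (s : Finset α) (k : ℕ) :
    #(assocPartitions (s.map f) k) = #(assocPartitions s k) := by
  symm
  refine card_bij (fun P _ => P.mapOfEmbedding f)
    (fun P hP => mapOfEmbedding_mem_assocPartitions.2 hP)
    (fun P _ Q _ h => Finpartition.ext (map_injective _ (congrArg Finpartition.parts h)))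
    (fun Q hQ => ?_)
  obtain ⟨P, rfl⟩ := Q.exists_mapOfEmbedding_eq f
  exact ⟨P, mapOfEmbedding_mem_assocPartitions.1 hQ, rfl⟩

lemma card_assocPartitions (s : Finset α) (k : ℕ) :
    #(assocPartitions s k) = assocStirling #s k := by
  let e : Fin #s ↪ α := s.equivFin.symm.toEmbedding.trans (Function.Embedding.subtype _)
  have he : univ.map e = s := by
    simp [e, ← map_map, univ_eq_attach, attach_map_val]
  calc #(assocPartitions s k) = #(assocPartitions (univ.map e) k) := by rw [he]
    _ = assocStirling #s k := by
      rw [card_assocPartitions_map, assocStirling, Nat.card_eq_fintype_card,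
        Fintype.card_subtype]
      simp only [assocPartitions]
      convert rfl

lemma assocPartitions_zero_of_nonempty (hs : s.Nonempty) :
    assocPartitions s 0 = ∅ := by
  refine eq_empty_of_forall_notMem fun P hP => ?_
  have := (mem_assocPartitions.1 hP).1
  rw [card_eq_zero, Finpartition.parts_eq_empty_iff] at this
  exact hs.ne_empty this

lemma card_assocPartitions_empty_zero : #(assocPartitions (∅ : Finset α) 0) = 1 := by
  have : Subsingleton (Finpartition (∅ : Finset α)) :=
    inferInstanceAs (Subsingleton (Finpartition (⊥ : Finset α)))
  rw [card_eq_one]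
  refine ⟨⊥, eq_singleton_iff_unique_mem.2 ⟨?_, fun P _ => Subsingleton.elim _ _⟩⟩
  simp [mem_assocPartitions]

lemma assocPartitions_eq_empty_of_card_lt {k : ℕ} (h : #s < 2 * k) :
    assocPartitions s k = ∅ := by
  refine eq_empty_of_forall_notMem fun P hP => h.not_ge ?_
  obtain ⟨hcard, hsize⟩ := mem_assocPartitions.1 hP
  calc 2 * k = #P.parts • 2 := by rw [hcard, smul_eq_mul, mul_comm]
    _ ≤ ∑ p ∈ P.parts, #p := card_nsmul_le_sum _ _ _ hsize
    _ = #s := P.sum_card_parts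

lemma assocStirling_zero_zero : assocStirling 0 0 = 1 := by
  have := card_assocPartitions (∅ : Finset ℕ) 0
  rwa [card_assocPartitions_empty_zero, card_empty, eq_comm] at this

lemma assocStirling_succ_zero (m : ℕ) : assocStirling (m + 1) 0 = 0 := by
  rw [← card_range (m + 1), ← card_assocPartitions,
    assocPartitions_zero_of_nonempty ⟨0, by simp⟩, card_empty]

lemma assocStirling_eq_zero_of_lt {m k : ℕ} (h : m < 2 * k) : assocStirling m k = 0 := by
  rw [← card_range m, ← card_assocPartitions, assocPartitions_eq_empty_of_card_lt, card_empty]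
  rwa [card_range]

open Finpartition in
lemma card_filter_three_le_card_part (hx : x ∈ s) (k : ℕ) :
    #{P ∈ assocPartitions s (k + 1) | 3 ≤ #(P.part x)} =
      (k + 1) * #(assocPartitions (s.erase x) (k + 1)) := by
  have h3 : ∀ P ∈ {P ∈ assocPartitions s (k + 1) | 3 ≤ #(P.part x)}, 3 ≤ #(P.part x) :=
    fun P hP => (mem_filter.1 hP).2
  calc _ = #((assocPartitions (s.erase x) (k + 1)).sigma fun Q => Q.parts) := by
        refine card_bij'
          (fun P hP => ⟨P.eraseFromPart hx (Nat.le_of_succ_le (h3 P hP)), (P.part x).erase x⟩)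
          (fun q hq => q.1.insertIntoPart hx (mem_sigma.1 hq).2) (fun P hP => ?_)
          (fun q hq => ?_) (fun P hP => ?_) (fun q hq => ?_)
        · refine mem_sigma.2 ⟨eraseFromPart_mem_assocPartitions (mem_filter.1 hP).1 hx (h3 P hP),
            ?_⟩
          rw [parts_eraseFromPart]
          exact mem_insert_self _ _
        · obtain ⟨hQ, hb⟩ := mem_sigma.1 hq
          refine mem_filter.2 ⟨insertIntoPart_mem_assocPartitions hQ hx hb, ?_⟩
          rw [card_part_insertIntoPart]
          exact Nat.succ_le_succ ((mem_assocPartitions.1 hQ).2 _ hb)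
        · exact P.insertIntoPart_eraseFromPart hx (Nat.le_of_succ_le (h3 P hP)) _
        · refine Sigma.ext (eraseFromPart_insertIntoPart _ hx _
            (two_le_card_part_insertIntoPart _ hx _)) (heq_of_eq ?_)
          dsimp only
          rw [part_insertIntoPart, erase_insert (q.1.notMem_of_mem_parts_erase (mem_sigma.1 hq).2)]
    _ = _ := by rw [card_sigma, sum_const_nat fun Q hQ => (mem_assocPartitions.1 hQ).1, mul_comm]

open Finpartition in
lemma card_filter_card_part_lt_three (hx : x ∈ s) (k : ℕ) :
    #{P ∈ assocPartitions s (k + 1) | ¬3 ≤ #(P.part x)} =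
      ∑ y ∈ s.erase x, #(assocPartitions (s \ {x, y}) k) := by
  have hpair : ∀ y ∈ s.erase x, {x, y} ⊆ s := fun y hy =>
    insert_subset hx (singleton_subset_iff.2 (mem_of_mem_erase hy))
  rw [← card_sigma]
  symm
  refine card_bij (fun q hq => q.2.addPart (insert_nonempty x {q.1})
    (hpair _ (mem_sigma.1 hq).1)) (fun q hq => ?_) (fun q₁ hq₁ q₂ hq₂ h => ?_)
    (fun P hP => ?_)
  · obtain ⟨hy, hQ⟩ := mem_sigma.1 hq
    have hxy : #({x, q.1} : Finset α) = 2 := card_pair (ne_of_mem_erase hy).symm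
    refine mem_filter.2 ⟨addPart_mem_assocPartitions hQ _ _ hxy.ge, ?_⟩
    rw [part_addPart _ _ _ (mem_insert_self _ _), hxy]
    omega
  · obtain ⟨y₁, Q₁⟩ := q₁
    obtain ⟨y₂, Q₂⟩ := q₂
    have hpart := congrArg (·.part x) h
    simp only [part_addPart _ _ _ (mem_insert_self _ _)] at hpart
    obtain rfl : y₁ = y₂ := by
      have := ne_of_mem_erase (mem_sigma.1 hq₁).1
      have hy : y₁ ∈ ({x, y₂} : Finset α) :=
        hpart ▸ mem_insert_of_mem (mem_singleton_self _)
      simpa [this] using hy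
    rw [← avoid_addPart Q₁ (insert_nonempty x {y₁}) (hpair _ (mem_sigma.1 hq₁).1), h,
      avoid_addPart]
  · obtain ⟨hP, h3⟩ := mem_filter.1 hP
    have hxP := P.mem_part_self.2 hx
    obtain ⟨y, hy⟩ : ∃ y, (P.part x).erase x = {y} := by
      have := (mem_assocPartitions.1 hP).2 _ (P.part_mem.2 hx)
      rw [← card_eq_one, card_erase_of_mem hxP]
      omega
    have hy' : y ∈ (P.part x).erase x := hy ▸ mem_singleton_self y
    have hc : {x, y} ∈ P.parts := by
      rw [← hy, insert_erase hxP]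
      exact P.part_mem.2 hx
    exact ⟨⟨y, P.avoid {x, y}⟩, mem_sigma.2 ⟨mem_erase.2 ⟨ne_of_mem_erase hy',
      P.part_subset x (mem_of_mem_erase hy')⟩, avoid_mem_assocPartitions hP hc⟩,
      P.addPart_avoid hc⟩

lemma card_assocPartitions_succ (hx : x ∈ s) (k : ℕ) :
    #(assocPartitions s (k + 1)) = (k + 1) * #(assocPartitions (s.erase x) (k + 1)) +
      ∑ y ∈ s.erase x, #(assocPartitions (s \ {x, y}) k) := by
  rw [← card_filter_three_le_card_part hx, ← card_filter_card_part_lt_three hx,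
    card_filter_add_card_filter_not]

theorem assocStirling_succ_succ (m k : ℕ) :
    assocStirling (m + 2) (k + 1) =
      (k + 1) * assocStirling (m + 1) (k + 1) + (m + 1) * assocStirling m k := by
  have hx : 0 ∈ range (m + 2) := by simp
  have hpair : ∀ y ∈ (range (m + 2)).erase 0, #(range (m + 2) \ {0, y}) = m := fun y hy => by
    rw [card_sdiff_of_subset (insert_subset hx (singleton_subset_iff.2 (mem_of_mem_erase hy))),
      card_range, card_pair (ne_of_mem_erase hy).symm]
    rfl
  have := card_assocPartitions_succ hx k
  simp only [card_assocPartitions, card_erase_of_mem hx, card_range] at this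
  rw [this, sum_congr rfl fun y hy => by rw [hpair y hy], sum_const, card_erase_of_mem hx,
    card_range, smul_eq_mul]
  rfl

lemma cast_choose_succ_right_mul (N K : ℕ) :
    (N.choose (K + 1) : ℤ) * (K + 1) = N.choose K * (N - K) := by
  rcases le_or_gt K N with h | h
  · rw [← Nat.cast_sub h]
    exact_mod_cast Nat.choose_succ_right_eq N K
  · rw [Nat.choose_eq_zero_of_lt h, Nat.choose_eq_zero_of_lt (by omega)]
    simp

section StirlingAltSum

variable (S : ℕ → ℕ → ℤ)

def stirlingAltSum (n k : ℕ) : ℤ :=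
  ∑ j ∈ range (k + 1), (-1) ^ (k - j) * S (n + j) j * ((n - j).choose (k - j) : ℤ)

variable {S}

lemma stirlingAltSum_zero_zero : stirlingAltSum S 0 0 = S 0 0 := by
  simp [stirlingAltSum]

lemma stirlingAltSum_zero_succ (hS : ∀ m j, m < 2 * j → S m j = 0) (k : ℕ) :
    stirlingAltSum S 0 (k + 1) = 0 := by
  refine sum_eq_zero fun j _ => ?_
  rcases Nat.eq_zero_or_pos j with rfl | hj
  · simp
  · simp [hS j j (by omega)]

lemma stirlingAltSum_succ_zero (hS : ∀ m, S (m + 1) 0 = 0) (n : ℕ) :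
    stirlingAltSum S (n + 1) 0 = 0 := by
  simp [stirlingAltSum, hS]

/-- Comparison of the coefficients of `S (n + j) j` in `stirlingAltSum_succ_succ`. -/
lemma stirlingAltSum_coeff (n k j : ℕ) (hjk : j ≤ k) (hjn : j ≤ n) :
    (-1 : ℤ) ^ (k + 1 - j) * j * (n + 1 - j).choose (k + 1 - j) +
        (-1) ^ (k - j) * (n + j + 1) * (n - j).choose (k - j) =
      (k + 1) * ((-1) ^ (k + 1 - j) * (n - j).choose (k + 1 - j)) +
        (2 * (n + 1) - (k + 1)) * ((-1) ^ (k - j) * (n - j).choose (k - j)) := by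
  obtain ⟨K, rfl⟩ := Nat.exists_eq_add_of_le hjk
  obtain ⟨N, rfl⟩ := Nat.exists_eq_add_of_le hjn
  have hsub : ∀ a b : ℕ, j + a + b - j = a + b := fun a b => by omega
  simp only [hsub, Nat.add_sub_cancel_left, pow_succ]
  have hpascal : ((N + 1).choose (K + 1) : ℤ) = N.choose K + N.choose (K + 1) := by
    exact_mod_cast Nat.choose_succ_succ' N K
  have habs := cast_choose_succ_right_mul N K
  push_cast
  linear_combination (-1 : ℤ) ^ K * (-(j : ℤ) * hpascal + habs)

lemma stirlingAltSum_succ_succ (hvan : ∀ m j, m < 2 * j → S m j = 0)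
    (hzero : ∀ m, S (m + 1) 0 = 0)
    (hrec : ∀ m i, S (m + 2) (i + 1) = (i + 1) * S (m + 1) (i + 1) + (m + 1) * S m i)
    (n k : ℕ) :
    stirlingAltSum S (n + 1) (k + 1) =
      (k + 1) * stirlingAltSum S n (k + 1) + (2 * (n + 1) - (k + 1)) * stirlingAltSum S n k := by
  set u : ℕ → ℤ := fun j =>
    (-1) ^ (k + 1 - j) * j * S (n + j) j * (n + 1 - j).choose (k + 1 - j)
  set w : ℕ → ℤ := fun j =>
    (-1) ^ (k - j) * (n + j + 1) * S (n + j) j * (n - j).choose (k - j)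
  set p : ℕ → ℤ := fun j => (-1) ^ (k + 1 - j) * S (n + j) j * (n - j).choose (k + 1 - j)
  set q : ℕ → ℤ := fun j => (-1) ^ (k - j) * S (n + j) j * (n - j).choose (k - j)
  have hstep : ∀ i, (-1) ^ (k + 1 - (i + 1)) * S (n + 1 + (i + 1)) (i + 1) *
      ((n + 1 - (i + 1)).choose (k + 1 - (i + 1)) : ℤ) = u (i + 1) + w i := fun i => by
    have := hrec (n + i) i
    simp only [u, w, Nat.add_sub_add_right, show n + 1 + (i + 1) = n + i + 2 by ring,
      show n + (i + 1) = n + i + 1 by ring] at this ⊢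
    rw [this]
    push_cast
    ring
  have hsplit : stirlingAltSum S (n + 1) (k + 1) =
      ∑ j ∈ range (k + 2), u j + ∑ j ∈ range (k + 1), w j := by
    rw [stirlingAltSum, sum_range_succ', sum_range_succ' u, sum_congr rfl fun i _ => hstep i,
      sum_add_distrib]
    simp [u, hzero]
  have hcoeff : ∀ j ∈ range (k + 1),
      u j + w j = (k + 1) * p j + (2 * (n + 1) - (k + 1)) * q j := by
    intro j hj
    rcases le_or_gt j n with hjn | hjn
    · linear_combination S (n + j) j * stirlingAltSum_coeff n k j (mem_range_succ_iff.1 hj) hjn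
    · simp [u, w, p, q, hvan (n + j) j (by omega)]
  have htop : u (k + 1) = (k + 1) * p (k + 1) := by
    simp [u, p]
  calc stirlingAltSum S (n + 1) (k + 1)
      = ∑ j ∈ range (k + 1), (u j + w j) + u (k + 1) := by
        rw [hsplit, sum_range_succ, sum_add_distrib]; ring
    _ = ∑ j ∈ range (k + 1), ((k + 1) * p j + (2 * (n + 1) - (k + 1)) * q j) +
          (k + 1) * p (k + 1) := by
        rw [sum_congr rfl hcoeff, htop]
    _ = _ := by
        rw [stirlingAltSum, stirlingAltSum, sum_range_succ _ (k + 1), mul_add (k + 1 : ℤ),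
          mul_sum, mul_sum, sum_add_distrib]
        ring

end StirlingAltSum

/-- The second-order Eulerian numbers with traditional indexing, defined by
`B(n,k) = k·B(n-1,k) + (2n-k)·B(n-1,k-1) + δ_{n0}δ_{k0}` (vanishing for
negative indices), satisfy
`B(n,k) = ∑_{j=0}^{k} (-1)^{k-j} {n+j over j}_{≥2} C(n-j, k-j)`. -/
theorem stmt15 (B : ℕ → ℕ → ℤ)
    (h00 : B 0 0 = 1) (h0k : ∀ k, B 0 (k + 1) = 0)
    (hn0 : ∀ n, B (n + 1) 0 = 0 * B n 0)
    (hrec : ∀ n k : ℕ, B (n + 1) (k + 1) =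
      ((k : ℤ) + 1) * B n (k + 1) +
      (2 * ((n : ℤ) + 1) - ((k : ℤ) + 1)) * B n k)
    (n k : ℕ) :
    B n k = ∑ j ∈ Finset.range (k + 1),
      (-1 : ℤ) ^ (k - j) * (assocStirling (n + j) j : ℤ) * ((n - j).choose (k - j) : ℤ) := by
  let S : ℕ → ℕ → ℤ := fun m j => assocStirling m j
  have hvan : ∀ m j, m < 2 * j → S m j = 0 := fun m j h => by
    simp [S, assocStirling_eq_zero_of_lt h]
  have hzero : ∀ m, S (m + 1) 0 = 0 := fun m => by simp [S, assocStirling_succ_zero]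
  have hS : ∀ m i, S (m + 2) (i + 1) = (i + 1) * S (m + 1) (i + 1) + (m + 1) * S m i :=
    fun m i => by simp [S, assocStirling_succ_succ]
  change B n k = stirlingAltSum S n k
  induction n generalizing k with
  | zero =>
    cases k with
    | zero => simp [h00, stirlingAltSum_zero_zero, S, assocStirling_zero_zero]
    | succ k => rw [h0k, stirlingAltSum_zero_succ hvan]
  | succ n ih =>
    cases k with
    | zero => rw [hn0, zero_mul, stirlingAltSum_succ_zero hzero]
    | succ k => rw [hrec, ih, ih, stirlingAltSum_succ_succ hvan hzero hS]
end

section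
/- The powers of the tree function satisfy T(z)^s = ∑_{k=0}^{∞} (s·(k+s)^{k-1}/k!)·z^{s+k} as formal power series, for every positive integer s, where T(z) = ∑_{n≥1} n^{n-1} z^n / n! is the tree function satisfying T(z)·e^{−T(z)} = z. -/
open PowerSeries

/-- The tree function `T(z) = ∑_{n≥1} n^{n-1} z^n / n!`, the compositional
inverse of `z e^{-z}`, as a formal power series over `ℚ`. -/
noncomputable def treeFun : PowerSeries ℚ :=
  PowerSeries.mk (fun n => if n = 0 then 0 else ((n : ℚ) ^ (n - 1)) / (n.factorial : ℚ))

/-! The coefficients are values of the Abel polynomials `A₀ = 1`, `A_{n+1}(x) = x (x + n + 1)ⁿ`,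
which are of binomial type: `A_n(x + y) = ∑ₖ (n choose k) A_k(x) A_{n-k}(y)`. As polynomials in `x`
both sides agree at `x = 0`, and `A_{n+1}' = (n + 1) A_n(X + 1)` relates their derivatives to the
case `n`, so the identity follows by induction. Consequently the exponential generating functions
`F_x = ∑ A_n(x) zⁿ / n!` satisfy `F_x F_y = F_{x+y}`, and since `T = z F_1`, `T^s = z^s F_s`. -/

open Finset

namespace Polynomial

variable {R : Type*} [CommRing R]

noncomputable def abel : ℕ → R[X]
  | 0 => 1
  | n + 1 => X * (X + ((n + 1 : ℕ) : R[X])) ^ n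

@[simp] lemma abel_zero : (abel 0 : R[X]) = 1 := rfl

lemma abel_succ (n : ℕ) : (abel (n + 1) : R[X]) = X * (X + ((n + 1 : ℕ) : R[X])) ^ n := rfl

lemma abel_succ_eval (n : ℕ) (x : R) : (abel (n + 1)).eval x = x * (x + (n + 1)) ^ n := by
  simp [abel_succ]

lemma abel_eval_zero (n : ℕ) : (abel n : R[X]).eval 0 = if n = 0 then 1 else 0 := by
  cases n <;> simp [abel_succ]

lemma derivative_abel_succ (n : ℕ) :
    derivative (abel (n + 1) : R[X]) = ((n + 1 : ℕ) : R[X]) * (abel n).comp (X + 1) := by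
  cases n with
  | zero => simp [abel_succ]
  | succ j =>
    simp only [abel_succ, derivative_mul, derivative_pow, derivative_add, derivative_X,
      derivative_natCast, mul_comp, X_comp, pow_comp, add_comp, natCast_comp, map_natCast]
    push_cast
    ring

lemma eq_of_derivative_eq_of_eval_zero_eq [IsAddTorsionFree R] {p q : R[X]}
    (hd : derivative p = derivative q) (h0 : p.eval 0 = q.eval 0) : p = q := by
  have hC := eq_C_of_derivative_eq_zero (p := p - q) (by rw [derivative_sub, hd, sub_self])
  rwa [coeff_zero_eq_eval_zero, eval_sub, h0, sub_self, map_zero, sub_eq_zero] at hC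

lemma derivative_sum_choose_mul_abel_succ (n : ℕ) (y : R) :
    derivative (∑ p ∈ antidiagonal (n + 1),
        ((n + 1).choose p.1 : R[X]) * abel p.1 * C ((abel p.2).eval y)) =
      ((n + 1 : ℕ) : R[X]) * (∑ p ∈ antidiagonal n,
        (n.choose p.1 : R[X]) * abel p.1 * C ((abel p.2).eval y)).comp (X + 1) := by
  rw [Finset.Nat.sum_antidiagonal_succ, derivative_add, sum_comp, mul_sum, derivative_sum]
  simp only [derivative_one, abel_zero, Nat.choose_zero_right, Nat.cast_one, mul_one, derivative_C,
    zero_add, derivative_mul, derivative_natCast, derivative_abel_succ, zero_mul, mul_zero, add_zero,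
    mul_comp, natCast_comp, C_comp]
  refine Finset.sum_congr rfl fun p _ => ?_
  have h : ((n + 1 : ℕ) : R[X]) * n.choose p.1 = (n + 1).choose (p.1 + 1) * (p.1 + 1 : ℕ) := by
    rw [← Nat.cast_mul, ← Nat.cast_mul, Nat.add_one_mul_choose_eq]
  linear_combination ((abel p.1).comp (X + 1) * C ((abel p.2).eval y)) * h.symm

theorem abel_comp_X_add_C [IsAddTorsionFree R] (n : ℕ) (y : R) :
    (abel n).comp (X + C y) =
      ∑ p ∈ antidiagonal n, (n.choose p.1 : R[X]) * abel p.1 * C ((abel p.2).eval y) := by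
  induction n with
  | zero => simp
  | succ n ih =>
    refine eq_of_derivative_eq_of_eval_zero_eq ?_ ?_
    · rw [derivative_sum_choose_mul_abel_succ, ← ih, derivative_comp, derivative_abel_succ]
      simp only [derivative_add, derivative_X, derivative_C, add_zero, mul_comp,
        natCast_comp, comp_assoc, add_comp, X_comp, one_comp, C_comp, one_mul]
      rw [add_right_comm]
    · rw [eval_finsetSum, sum_eq_single (0, n + 1)]
      · simp
      · rintro ⟨i, j⟩ hij hne
        have hi : i ≠ 0 := by rintro rfl; simp_all
        simp [abel_eval_zero, hi]
      · simp

theorem abel_eval_add [IsAddTorsionFree R] (n : ℕ) (x y : R) :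
    (abel n).eval (x + y) =
      ∑ p ∈ antidiagonal n, n.choose p.1 * (abel p.1).eval x * (abel p.2).eval y := by
  simpa [eval_finsetSum] using congrArg (eval x) (abel_comp_X_add_C n y)

end Polynomial

section AbelSeries

variable {K : Type*} [Field K] [CharZero K]

noncomputable def abelSeries (x : K) : K⟦X⟧ :=
  PowerSeries.mk fun n => (Polynomial.abel n).eval x / n.factorial

lemma abelSeries_zero : abelSeries (0 : K) = 1 := by
  ext n
  cases n <;> simp [abelSeries, Polynomial.abel_eval_zero]

lemma abelSeries_mul (x y : K) : abelSeries x * abelSeries y = abelSeries (x + y) := by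
  ext n
  simp only [abelSeries, coeff_mul, coeff_mk, Polynomial.abel_eval_add, Finset.sum_div]
  refine Finset.sum_congr rfl fun p hp => ?_
  rw [HasAntidiagonal.mem_antidiagonal] at hp
  subst hp
  have hfac : ((p.1 + p.2).factorial : K) ≠ 0 := Nat.cast_ne_zero.mpr (Nat.factorial_ne_zero _)
  rw [Nat.cast_add_choose]
  field_simp

lemma abelSeries_pow (x : K) (s : ℕ) : abelSeries x ^ s = abelSeries (s * x) := by
  induction s with
  | zero => simp [abelSeries_zero]
  | succ s ih => rw [pow_succ, ih, abelSeries_mul, Nat.cast_succ, add_one_mul]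

end AbelSeries

lemma treeFun_eq_X_mul_abelSeries_one : treeFun = X * abelSeries 1 := by
  ext n
  rcases n with _ | _ | i
  · simp [treeFun]
  · simp [treeFun, abelSeries]
  · have hfac : ((i + 1).factorial : ℚ) ≠ 0 := Nat.cast_ne_zero.mpr (Nat.factorial_ne_zero _)
    simp only [treeFun, abelSeries, coeff_mk, coeff_succ_X_mul, Polynomial.abel_succ_eval,
      Nat.factorial_succ (i + 1)]
    push_cast
    field_simp
    ring

lemma treeFun_pow (s : ℕ) : treeFun ^ s = X ^ s * abelSeries (s : ℚ) := by
  rw [treeFun_eq_X_mul_abelSeries_one, mul_pow, abelSeries_pow, mul_one]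

theorem stmt17_general (s : ℕ) :
    treeFun ^ s = PowerSeries.mk (fun m =>
      if m < s then 0
      else if m = s then 1
      else (s : ℚ) * (((m - s : ℕ) : ℚ) + (s : ℚ)) ^ ((m - s) - 1) / ((m - s).factorial : ℚ)) := by
  ext m
  rw [treeFun_pow, coeff_X_pow_mul', coeff_mk]
  obtain hm | rfl | hm := lt_trichotomy m s
  · simp [hm, Nat.not_le.mpr hm]
  · simp [abelSeries]
  · obtain ⟨k, rfl⟩ : ∃ k, m = s + (k + 1) := ⟨m - s - 1, by omega⟩
    rw [if_pos (by omega), if_neg (by omega), if_neg (by omega), Nat.add_sub_cancel_left,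
      Nat.add_sub_cancel, abelSeries, coeff_mk, Polynomial.abel_succ_eval]
    push_cast
    ring

/-- Powers of the tree function: for a positive integer `s`,
`T(z)^s = ∑_{k≥0} (s (k+s)^{k-1} / k!) z^{s+k}`, where `(k+s)^{k-1}` is read
as `1/s` when `k = 0` (so that the `k = 0` coefficient equals `1`). -/
theorem stmt17 (s : ℕ) (hs : 1 ≤ s) :
    treeFun ^ s = PowerSeries.mk (fun m =>
      if m < s then 0
      else if m = s then 1
      else (s : ℚ) * (((m - s : ℕ) : ℚ) + (s : ℚ)) ^ ((m - s) - 1) / ((m - s).factorial : ℚ)) :=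
  stmt17_general s
end
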